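/- arXiv:1301.4008 — 13 statements merged into one kernel-verified Lean document; each statement's English description precedes it below -/
import Mathlib

section
/- Let F_1, F_2, ..., F_k (k ≥ 1) be graphs on a common finite vertex set V of size n, and suppose every factor F_i has minimum degree at least δ, where δ ≥ 1. Let G be the combined graph, i.e., the graph on V whose edge set is the union of the edge sets of the F_i. Then the simultaneous domination number of F_1, ..., F_k is at most τ_{δ−1}(G), the (δ−1)-vertex covering number of G, which equals n − α_{δ−1}(G). -/
/-- The simultaneous domination number of factors `F 0, …, F (k-1)` on a common
finite vertex set: the minimum cardinality of a set `S` that is a dominating set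
in every factor. -/
noncomputable def simDomNum {V : Type*} [Fintype V] {k : ℕ}
    (F : Fin k → SimpleGraph V) : ℕ :=
  sInf {m | ∃ S : Finset V, (∀ i, ∀ v ∉ S, ∃ u ∈ S, (F i).Adj v u) ∧ S.card = m}

/-- The `t`-vertex covering number `τ_t(G)`: minimum size of a set `S` such that
every vertex outside `S` has at most `t` neighbours outside `S`. -/
noncomputable def tVertexCoverNum {V : Type*} [Fintype V]
    (G : SimpleGraph V) (t : ℕ) : ℕ :=
  sInf {m | ∃ S : Finset V, (∀ v ∉ S, ((G.neighborSet v) \ ↑S).ncard ≤ t) ∧ S.card = m}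

/-- The `t`-independence number `α_t(G)`: maximum size of a set `S` such that
every vertex of `S` has at most `t` neighbours inside `S`. -/
noncomputable def tIndepNum {V : Type*} [Fintype V]
    (G : SimpleGraph V) (t : ℕ) : ℕ :=
  sSup {m | ∃ S : Finset V, (∀ v ∈ S, ((G.neighborSet v) ∩ ↑S).ncard ≤ t) ∧ S.card = m}

theorem stmt0 {V : Type*} [Fintype V] {k n δ : ℕ} (hk : 1 ≤ k) (hδ : 1 ≤ δ)
    (hn : Fintype.card V = n) (F : Fin k → SimpleGraph V)
    (hmin : ∀ i, ∀ v : V, δ ≤ ((F i).neighborSet v).ncard) :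
    simDomNum F ≤ tVertexCoverNum (⨆ i, F i) (δ - 1) ∧
      tVertexCoverNum (⨆ i, F i) (δ - 1) = n - tIndepNum (⨆ i, F i) (δ - 1) := by
  classical
  have hGsub : ∀ i : Fin k, F i ≤ ⨆ j, F j := fun i => le_iSup F i
  set G := ⨆ i, F i with hG
  set covSet := {m | ∃ S : Finset V, (∀ v ∉ S, ((G.neighborSet v) \ ↑S).ncard ≤ δ - 1) ∧ S.card = m} with hcovSet
  set indSet := {m | ∃ S : Finset V, (∀ v ∈ S, ((G.neighborSet v) ∩ ↑S).ncard ≤ δ - 1) ∧ S.card = m} with hindSet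
  have hcovne : covSet.Nonempty :=
    ⟨Finset.univ.card, Finset.univ, fun v hv => absurd (Finset.mem_univ v) hv, rfl⟩
  have hindne : indSet.Nonempty :=
    ⟨0, ∅, by simp, rfl⟩
  have hbdd : BddAbove indSet := by
    refine ⟨n, ?_⟩
    rintro m ⟨S, -, rfl⟩
    calc S.card ≤ Finset.univ.card := Finset.card_le_univ S
    _ = n := by rw [Finset.card_univ, hn]
  have hτn : tVertexCoverNum G (δ - 1) ≤ n := by
    have : Finset.univ.card ∈ covSet := ⟨Finset.univ, fun v hv => absurd (Finset.mem_univ v) hv, rfl⟩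
    have := Nat.sInf_le this
    simpa [tVertexCoverNum, Finset.card_univ, hn] using this
  -- key: any cover is a simultaneous dominating set
  have key : ∀ S : Finset V, (∀ v ∉ S, ((G.neighborSet v) \ ↑S).ncard ≤ δ - 1) →
      ∀ i, ∀ v ∉ S, ∃ u ∈ S, (F i).Adj v u := by
    intro S hS i v hv
    by_contra h
    push_neg at h
    have hsub : (F i).neighborSet v ⊆ (G.neighborSet v) \ ↑S := by
      intro u hu
      exact ⟨hGsub i hu, fun hus => h u hus hu⟩
    have h1 := Set.ncard_le_ncard hsub (Set.toFinite _)
    have h2 := hmin i v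
    have h3 := hS v hv
    omega
  constructor
  · obtain ⟨S, hS, hcard⟩ : tVertexCoverNum G (δ - 1) ∈ covSet := Nat.sInf_mem hcovne
    exact Nat.sInf_le ⟨S, key S hS, hcard⟩
  · have hle : tVertexCoverNum G (δ - 1) ≤ n - tIndepNum G (δ - 1) := by
      obtain ⟨T, hT, hcard⟩ : tIndepNum G (δ - 1) ∈ indSet := Nat.sSup_mem hindne hbdd
      refine Nat.sInf_le ⟨Tᶜ, ?_, ?_⟩
      · intro v hv
        have hvT : v ∈ T := by simpa using hv
        have : (G.neighborSet v) \ ↑(Tᶜ) = (G.neighborSet v) ∩ ↑T := by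
          rw [Finset.coe_compl, Set.diff_eq, compl_compl]
        rw [this]
        exact hT v hvT
      · rw [Finset.card_compl, hcard, hn]
    have hge : n - tVertexCoverNum G (δ - 1) ≤ tIndepNum G (δ - 1) := by
      obtain ⟨S, hS, hcard⟩ : tVertexCoverNum G (δ - 1) ∈ covSet := Nat.sInf_mem hcovne
      refine le_csSup hbdd ⟨Sᶜ, ?_, ?_⟩
      · intro v hv
        have hvS : v ∉ S := by simpa using hv
        have : (G.neighborSet v) ∩ ↑(Sᶜ) = (G.neighborSet v) \ ↑S := by
          rw [Finset.coe_compl, Set.diff_eq]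
        rw [this]
        exact hS v hvS
      · rw [Finset.card_compl, hcard, hn]
    omega
end

section
/- Let F_1, F_2, ..., F_k (k ≥ 1) be graphs on a common finite vertex set V of size n, each with minimum degree at least δ, where δ ≥ 1, and let G be the combined graph with average degree d̄. Then the simultaneous domination number of F_1, ..., F_k is at most (⌈d̄⌉ / (⌈d̄⌉ + δ)) · n. -/
/-!
Call `A` *`δ`-independent* in the combined graph `G` if every vertex of `A` has fewer than `δ`
`G`-neighbours in `A`. Every vertex has at least `δ` neighbours in each factor, so the complement
of a `δ`-independent set dominates every factor; it remains to find one with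
`δ n ≤ (D + δ)|A|`, where `D = ⌈d̄⌉`.

A set `A ⊆ W` maximizing `(2δ - 1)|S| - 2e(S)` is `δ`-independent and every vertex of `W \ A`
has at least `δ` neighbours in `A`, so passing from `W` to `W \ A` loses at least `2δ|W \ A|`
from `2e`. If every `δ`-independent set has at most `K` vertices, peeling `J` times from `V` gives
`2δ ∑_{j=1}^{J} (n - jK) ≤ 2e(G) ≤ D n`, and for `J = ⌊D/δ⌋ + 1` (so `D < δJ ≤ D + δ`) this
forces `δ n ≤ (D + δ) K`.
-/

open Finset

lemma mul_le_add_mul_of_rounds_bound {δ D J n K : ℤ} (hδ : 0 < δ) (hJ : 0 < J)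
    (hDJ : D ≤ δ * J) (hJD : δ * J ≤ D + δ) (hn : 0 ≤ n)
    (h : δ * (2 * J * n - J * (J + 1) * K) ≤ D * n) : δ * n ≤ (D + δ) * K := by
  -- with `x = δJ`, this is `x (x + δ) n ≤ (2x - D)(D + δ) n`
  have key : 0 ≤ (δ * J - D) * (D + δ - δ * J) * n :=
    mul_nonneg (mul_nonneg (by linarith) (by linarith)) hn
  have hc : 0 < δ * (J * (J + 1)) := by positivity
  have h2 := mul_le_mul_of_nonneg_left h (by nlinarith : 0 ≤ D + δ)
  refine le_of_mul_le_mul_left ?_ hc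
  linarith

namespace SimpleGraph

variable {V : Type*} (G : SimpleGraph V) [DecidableRel G.Adj]

def degreeIn (A : Finset V) (v : V) : ℕ := #{u ∈ A | G.Adj v u}

-- twice the number of edges of `G` inside `S`
def degreeSumIn (S : Finset V) : ℕ := ∑ v ∈ S, G.degreeIn S v

-- in the sense of Fink and Jacobson: induced degrees `< k`, so `1`-independent means independent
def IsKIndepSet (k : ℕ) (A : Finset V) : Prop := ∀ v ∈ A, G.degreeIn A v < k

variable {G}

lemma degreeSumIn_univ [Fintype V] : G.degreeSumIn univ = 2 * #G.edgeFinset := by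
  rw [← sum_degrees_eq_twice_card_edges]
  refine sum_congr rfl fun v _ => ?_
  rw [← card_neighborFinset_eq_degree, neighborFinset_eq_filter]
  rfl

lemma IsKIndepSet.exists_adj_notMem {δ : ℕ} {A : Finset V} (hA : G.IsKIndepSet δ A)
    {H : SimpleGraph V} (hHG : H ≤ G) (hmin : ∀ v, δ ≤ (H.neighborSet v).ncard)
    {v : V} (hv : v ∈ A) : ∃ u ∉ A, H.Adj v u := by
  by_contra! hA_closed
  have hsub : H.neighborSet v ⊆ ({u ∈ A | G.Adj v u} : Finset V) := fun u hu =>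
    mem_filter.2 ⟨by_contra fun huA => hA_closed u huA hu, hHG hu⟩
  have := Set.ncard_le_ncard hsub (finite_toSet _)
  rw [Set.ncard_coe_finset] at this
  exact (hmin v).not_gt ((this.trans_lt (hA v hv)))

variable [DecidableEq V]
lemma degreeIn_union {A B : Finset V} (h : Disjoint A B) (v : V) :
    G.degreeIn (A ∪ B) v = G.degreeIn A v + G.degreeIn B v := by
  rw [degreeIn, filter_union, card_union_of_disjoint (disjoint_filter_filter h)]
  rfl

lemma degreeIn_erase_self (A : Finset V) (v : V) :
    G.degreeIn (A.erase v) v = G.degreeIn A v := by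
  rw [degreeIn, filter_erase, erase_eq_of_notMem (by simp)]
  rfl

lemma degreeSumIn_insert {A : Finset V} {b : V} (hb : b ∉ A) :
    G.degreeSumIn (insert b A) = G.degreeSumIn A + 2 * G.degreeIn A b := by
  have hself : G.degreeIn (insert b A) b = G.degreeIn A b := by
    rw [← degreeIn_erase_self, erase_insert hb]
  have hother : ∀ v ∈ A,
      G.degreeIn (insert b A) v = G.degreeIn A v + if G.Adj b v then 1 else 0 := by
    intro v _
    rw [← singleton_union, degreeIn_union (disjoint_singleton_left.2 hb), add_comm]
    simp only [degreeIn, filter_singleton, G.adj_comm v b]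
    split_ifs <;> rfl
  rw [degreeSumIn, sum_insert hb, hself, sum_congr rfl hother, sum_add_distrib, ← card_filter]
  unfold degreeSumIn degreeIn
  ring

lemma degreeSumIn_union {A B : Finset V} (h : Disjoint A B) :
    G.degreeSumIn (A ∪ B) =
      G.degreeSumIn A + 2 * ∑ b ∈ B, G.degreeIn A b + G.degreeSumIn B := by
  induction B using Finset.induction_on with
  | empty => simp [degreeSumIn]
  | insert b B hb ih =>
    have hbA : b ∉ A := disjoint_right.1 h (mem_insert_self b B)
    have hAB : Disjoint A B := disjoint_of_subset_right (subset_insert b B) h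
    rw [union_insert, degreeSumIn_insert (by simp [hbA, hb]), ih hAB, degreeIn_union hAB,
      degreeSumIn_insert hb, sum_insert hb]
    ring

lemma degreeSumIn_sdiff_add_le {A W : Finset V} {δ : ℕ} (hAW : A ⊆ W)
    (hout : ∀ b ∈ W \ A, δ ≤ G.degreeIn A b) :
    G.degreeSumIn (W \ A) + 2 * δ * #(W \ A) ≤ G.degreeSumIn W := by
  have hsum : δ * #(W \ A) ≤ ∑ b ∈ W \ A, G.degreeIn A b := by
    simpa [mul_comm] using card_nsmul_le_sum _ _ _ hout
  have hsplit := G.degreeSumIn_union (disjoint_sdiff (s := A) (t := W))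
  rw [union_sdiff_of_subset hAW] at hsplit
  rw [mul_assoc]
  omega

-- the `- 1` turns each of the two one-vertex moves into a strict gain, so no tie-break is needed
lemma exists_isKIndepSet_forall_le_degreeIn (δ : ℕ) (W : Finset V) :
    ∃ A ⊆ W, G.IsKIndepSet δ A ∧ ∀ b ∈ W \ A, δ ≤ G.degreeIn A b := by
  let φ : Finset V → ℤ := fun S => (2 * δ - 1) * #S - G.degreeSumIn S
  obtain ⟨A, hAW, hmax⟩ := exists_max_image W.powerset φ ⟨∅, empty_mem_powerset W⟩
  rw [mem_powerset] at hAW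
  refine ⟨A, hAW, fun v hv => ?_, fun b hb => ?_⟩
  · by_contra! hdeg
    have hle := hmax (A.erase v) (mem_powerset.2 ((erase_subset v A).trans hAW))
    have hsum := G.degreeSumIn_insert (notMem_erase v A)
    rw [insert_erase hv, degreeIn_erase_self] at hsum
    have hcard := card_erase_add_one hv
    simp only [φ] at hle
    push_cast [hsum, ← hcard] at hle
    linarith
  · rw [mem_sdiff] at hb
    by_contra! hdeg
    have hle := hmax (insert b A) (mem_powerset.2 (insert_subset hb.1 hAW))
    simp only [φ] at hle
    push_cast [degreeSumIn_insert hb.2, card_insert_of_notMem hb.2] at hle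
    linarith

lemma degreeSumIn_ge_of_forall_card_le {δ K : ℕ} (hK : ∀ A, G.IsKIndepSet δ A → #A ≤ K)
    (J : ℕ) (W : Finset V) :
    (δ : ℤ) * (2 * J * #W - J * (J + 1) * K) ≤ G.degreeSumIn W := by
  induction J generalizing W with
  | zero => simp
  | succ J ih =>
    obtain ⟨A, hAW, hA, hout⟩ := G.exists_isKIndepSet_forall_le_degreeIn δ W
    have hstep : (G.degreeSumIn (W \ A) : ℤ) + 2 * δ * #(W \ A) ≤ G.degreeSumIn W := by
      exact_mod_cast degreeSumIn_sdiff_add_le hAW hout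
    have hcard : (#W : ℤ) - K ≤ #(W \ A) := by
      have := hK A hA
      rw [card_sdiff_of_subset hAW]
      omega
    have hind := ih (W \ A)
    have hmono : (0 : ℤ) ≤ δ * (J + 1) * (#(W \ A) - (#W - K)) := by
      apply mul_nonneg <;> [positivity; linarith]
    push_cast
    linarith

theorem exists_isKIndepSet_mul_card_le [Fintype V] {δ D : ℕ} (hδ : 0 < δ)
    (hD : 2 * #G.edgeFinset ≤ D * Fintype.card V) :
    ∃ A, G.IsKIndepSet δ A ∧ δ * Fintype.card V ≤ (D + δ) * #A := by
  classical
  obtain ⟨A, hA, hmax⟩ := exists_max_image ({S | G.IsKIndepSet δ S} : Finset (Finset V)) card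
    ⟨∅, mem_filter.2 ⟨mem_univ _, by simp [IsKIndepSet]⟩⟩
  refine ⟨A, (mem_filter.1 hA).2, ?_⟩
  set J := D / δ + 1
  have hrounds := degreeSumIn_ge_of_forall_card_le
    (fun S hS => hmax S (mem_filter.2 ⟨mem_univ S, hS⟩)) J univ
  rw [degreeSumIn_univ, card_univ] at hrounds
  have hJ : D < δ * J ∧ δ * J ≤ D + δ := by
    have := Nat.div_add_mod D δ
    have := Nat.mod_lt D hδ
    have : δ * J = δ * (D / δ) + δ := by rw [mul_add, mul_one]
    omega
  have hbound := mul_le_add_mul_of_rounds_bound (D := D) (J := J) (K := #A)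
    (by exact_mod_cast hδ) (by positivity) (by exact_mod_cast hJ.1.le) (by exact_mod_cast hJ.2)
    (Nat.cast_nonneg (Fintype.card V)) (hrounds.trans (by exact_mod_cast hD))
  exact_mod_cast hbound

end SimpleGraph

lemma simDomNum_le_of_isKIndepSet {V : Type*} [Fintype V] [DecidableEq V] {k δ : ℕ}
    {F : Fin k → SimpleGraph V} [DecidableRel (⨆ i, F i).Adj]
    (hmin : ∀ i, ∀ v : V, δ ≤ ((F i).neighborSet v).ncard) {A : Finset V}
    (hA : (⨆ i, F i).IsKIndepSet δ A) : simDomNum F ≤ Fintype.card V - #A := by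
  refine Nat.sInf_le ⟨univ \ A, fun i v hv => ?_, card_univ_sdiff A⟩
  obtain ⟨u, hu, hvu⟩ := hA.exists_adj_notMem (le_iSup F i) (hmin i) (by simpa using hv)
  exact ⟨u, by simpa using hu, hvu⟩

theorem stmt1_general {V : Type*} [Fintype V] {k n δ : ℕ} (hδ : 1 ≤ δ)
    (hn : Fintype.card V = n) (F : Fin k → SimpleGraph V)
    (hmin : ∀ i, ∀ v : V, δ ≤ ((F i).neighborSet v).ncard)
    (dbar : ℝ) (hd : dbar = 2 * ((⨆ i, F i).edgeSet.ncard : ℝ) / n) :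
    (simDomNum F : ℝ) ≤ ((⌈dbar⌉ : ℝ) / ((⌈dbar⌉ : ℝ) + δ)) * n := by
  classical
  set G := ⨆ i, F i
  have hm : (G.edgeSet.ncard : ℝ) = #G.edgeFinset := by
    rw [← SimpleGraph.coe_edgeFinset, Set.ncard_coe_finset]
  obtain ⟨D, hD⟩ : ∃ D : ℕ, ⌈dbar⌉ = D :=
    Int.eq_ofNat_of_zero_le (Int.ceil_nonneg (by rw [hd]; positivity))
  have hedges : 2 * #G.edgeFinset ≤ D * n := by
    rcases n.eq_zero_or_pos with rfl | hpos
    · have : IsEmpty V := Fintype.card_eq_zero_iff.1 hn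
      simp [← G.sum_degrees_eq_twice_card_edges]
    · have := Int.le_ceil dbar
      rw [hD, hd, hm, div_le_iff₀ (by positivity)] at this
      exact_mod_cast this
  obtain ⟨A, hA, hcard⟩ := G.exists_isKIndepSet_mul_card_le hδ (hn ▸ hedges)
  have hsd := simDomNum_le_of_isKIndepSet hmin hA
  have hAn : #A ≤ n := hn ▸ card_le_univ A
  rw [hn] at hsd hcard
  rw [hD, Int.cast_natCast, div_mul_eq_mul_div, le_div_iff₀ (by positivity)]
  have : (simDomNum F : ℝ) ≤ n - #A := by rw [← Nat.cast_sub hAn]; exact_mod_cast hsd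
  have : (δ * n : ℝ) ≤ (D + δ) * #A := by exact_mod_cast hcard
  nlinarith

theorem stmt1 {V : Type*} [Fintype V] {k n δ : ℕ} (hk : 1 ≤ k) (hδ : 1 ≤ δ)
    (hn : Fintype.card V = n) (F : Fin k → SimpleGraph V)
    (hmin : ∀ i, ∀ v : V, δ ≤ ((F i).neighborSet v).ncard)
    (dbar : ℝ) (hd : dbar = 2 * ((⨆ i, F i).edgeSet.ncard : ℝ) / n) :
    (simDomNum F : ℝ) ≤ ((⌈dbar⌉ : ℝ) / ((⌈dbar⌉ : ℝ) + δ)) * n :=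
  stmt1_general hδ hn F hmin dbar hd
end

section
/- Let k ≥ 1 and δ ≥ 1, and let F_1, F_2, ..., F_k be graphs on a common finite vertex set V of size n, each of which is δ-regular. Then the simultaneous domination number of F_1, ..., F_k is at most (k/(k+1)) · n. -/
open Finset in
lemma exists_good_coloring {V : Type*} [Fintype V] [DecidableEq V] {k δ : ℕ}
    (hδ : 1 ≤ δ) (F : Fin k → SimpleGraph V)
    [∀ i, DecidableRel (F i).Adj]
    (hreg : ∀ i v, ((F i).neighborFinset v).card = δ) :
    ∃ c : V → Fin (k + 1), ∀ v i, ∃ u, (F i).Adj v u ∧ c u ≠ c v := by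
  classical
  set dd : (V → Fin (k+1)) → V → Fin (k+1) → Fin k → ℕ :=
    fun c v p i => ∑ u ∈ (F i).neighborFinset v, if c u = p then 1 else 0 with hdd
  set W : (V → Fin (k+1)) → ℕ :=
    fun c => ∑ i, ∑ q ∈ univ.filter (fun q : V × V => (F i).Adj q.1 q.2),
      (if c q.1 = c q.2 then 1 else 0) with hWdef
  obtain ⟨c, -, hc⟩ := Finset.exists_min_image (univ : Finset (V → Fin (k+1))) W univ_nonempty
  refine ⟨c, fun v i => ?_⟩
  by_contra hcon
  push_neg at hcon
  have hsum_p : ∀ i' : Fin k, ∑ p : Fin (k+1), dd c v p i' = δ := by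
    intro i'
    simp only [hdd]
    rw [Finset.sum_comm]
    simp [Finset.sum_ite_eq, hreg i' v]
  have he : dd c v (c v) i = δ := by
    simp only [hdd]
    rw [Finset.sum_congr rfl (fun u hu => by
      rw [if_pos (hcon u ((SimpleGraph.mem_neighborFinset _ _ _).mp hu))])]
    simp [hreg i v]
  have hE : δ ≤ ∑ i', dd c v (c v) i' :=
    he ▸ Finset.single_le_sum (f := fun i' => dd c v (c v) i') (fun _ _ => Nat.zero_le _) (mem_univ i)
  have hex : ∃ p, p ≠ c v ∧ ∑ i', dd c v p i' < ∑ i', dd c v (c v) i' := by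
    by_contra hno
    push_neg at hno
    have htot : ∑ p : Fin (k+1), ∑ i', dd c v p i' = k * δ := by
      rw [Finset.sum_comm]
      simp [hsum_p, mul_comm]
    have h2 : k * δ ≤ ∑ p ∈ univ.erase (c v), ∑ i', dd c v p i' := by
      calc k * δ = (univ.erase (c v)).card * δ := by
            simp [Finset.card_erase_of_mem]
        _ ≤ ∑ p ∈ univ.erase (c v), ∑ i', dd c v p i' := by
            rw [← smul_eq_mul]
            exact Finset.card_nsmul_le_sum _ _ _
              (fun p hp => le_trans hE (hno p (Finset.ne_of_mem_erase hp)))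
    have h3 : k * δ + δ ≤ ∑ p ∈ univ.erase (c v), (∑ i', dd c v p i') + ∑ i', dd c v (c v) i' :=
      Nat.add_le_add h2 hE
    rw [Finset.sum_erase_add _ _ (mem_univ (c v)), htot] at h3
    rw [add_le_iff_nonpos_right] at h3
    omega
  obtain ⟨p, hpne, hlt⟩ := hex
  set c' : V → Fin (k+1) := Function.update c v p with hc'def
  have hune : ∀ u, u ≠ v → c' u = c u := fun u hu => Function.update_of_ne hu _ _
  have huv : c' v = p := Function.update_self _ _ _
  have decomp : ∀ x : V → Fin (k+1), W x = ∑ i', (2 * dd x v (x v) i' +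
      ∑ q ∈ ((univ.filter (fun q : V × V => (F i').Adj q.1 q.2)).filter
          (fun q => ¬ q.1 = v)).filter (fun q => ¬ q.2 = v),
        (if x q.1 = x q.2 then 1 else 0)) := by
    intro x
    rw [hWdef]
    refine Finset.sum_congr rfl (fun i' _ => ?_)
    rw [← Finset.sum_filter_add_sum_filter_not
      (univ.filter (fun q : V × V => (F i').Adj q.1 q.2)) (fun q => q.1 = v)]
    rw [← Finset.sum_filter_add_sum_filter_not
      ((univ.filter (fun q : V × V => (F i').Adj q.1 q.2)).filter (fun q => ¬ q.1 = v))
      (fun q => q.2 = v)]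
    have hA : (univ.filter (fun q : V × V => (F i').Adj q.1 q.2)).filter (fun q => q.1 = v)
        = ({v} : Finset V) ×ˢ (F i').neighborFinset v := by
      ext ⟨a, b⟩
      simp only [Finset.mem_filter, Finset.mem_univ, true_and, Finset.mem_product,
        Finset.mem_singleton, SimpleGraph.mem_neighborFinset]
      constructor
      · rintro ⟨hab, rfl⟩; exact ⟨rfl, hab⟩
      · rintro ⟨rfl, hb⟩; exact ⟨hb, rfl⟩
    have hB : ((univ.filter (fun q : V × V => (F i').Adj q.1 q.2)).filter
          (fun q => ¬ q.1 = v)).filter (fun q => q.2 = v)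
        = (F i').neighborFinset v ×ˢ ({v} : Finset V) := by
      ext ⟨a, b⟩
      simp only [Finset.mem_filter, Finset.mem_univ, true_and, Finset.mem_product,
        Finset.mem_singleton, SimpleGraph.mem_neighborFinset]
      constructor
      · rintro ⟨⟨hab, _⟩, rfl⟩; exact ⟨hab.symm, rfl⟩
      · rintro ⟨ha, rfl⟩; exact ⟨⟨ha.symm, ha.symm.ne⟩, rfl⟩
    rw [hA, hB, Finset.sum_product, Finset.sum_singleton, Finset.sum_product_right,
      Finset.sum_singleton]
    have e1 : ∑ b ∈ (F i').neighborFinset v, (if x v = x b then 1 else 0) = dd x v (x v) i' := by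
      rw [hdd]
      exact Finset.sum_congr rfl (fun u _ => if_congr eq_comm rfl rfl)
    have e2 : ∑ a ∈ (F i').neighborFinset v, (if x a = x v then 1 else 0) = dd x v (x v) i' := by
      rw [hdd]
    dsimp only
    rw [e1, e2]
    omega
  have hddc' : ∀ i', dd c' v (c' v) i' = dd c v p i' := by
    intro i'
    rw [huv, hdd]
    refine Finset.sum_congr rfl (fun u hu => ?_)
    rw [hune u ((SimpleGraph.mem_neighborFinset _ _ _).mp hu).ne']
  have hCoff : ∀ i', ∑ q ∈ ((univ.filter (fun q : V × V => (F i').Adj q.1 q.2)).filter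
          (fun q => ¬ q.1 = v)).filter (fun q => ¬ q.2 = v),
        (if c' q.1 = c' q.2 then 1 else 0)
      = ∑ q ∈ ((univ.filter (fun q : V × V => (F i').Adj q.1 q.2)).filter
          (fun q => ¬ q.1 = v)).filter (fun q => ¬ q.2 = v),
        (if c q.1 = c q.2 then 1 else 0) := by
    intro i'
    refine Finset.sum_congr rfl (fun q hq => ?_)
    simp only [Finset.mem_filter] at hq
    rw [hune q.1 hq.1.2, hune q.2 hq.2]
  have hWlt : W c' < W c := by
    rw [decomp c', decomp c]
    have h1 : ∀ i', 2 * dd c' v (c' v) i' = 2 * dd c v p i' := fun i' => by rw [hddc' i']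
    calc ∑ i', (2 * dd c' v (c' v) i' + _) = ∑ i', (2 * dd c v p i' +
          ∑ q ∈ ((univ.filter (fun q : V × V => (F i').Adj q.1 q.2)).filter
              (fun q => ¬ q.1 = v)).filter (fun q => ¬ q.2 = v),
            (if c q.1 = c q.2 then 1 else 0)) := by
          exact Finset.sum_congr rfl (fun i' _ => by rw [h1 i', hCoff i'])
      _ < _ := by
          rw [Finset.sum_add_distrib, Finset.sum_add_distrib, ← Finset.mul_sum, ← Finset.mul_sum]
          omega
  exact absurd (hc c' (mem_univ c')) (not_le.mpr hWlt)

open Finset in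
theorem stmt2 {V : Type*} [Fintype V] {k n δ : ℕ} (hk : 1 ≤ k) (hδ : 1 ≤ δ)
    (hn : Fintype.card V = n) (F : Fin k → SimpleGraph V)
    (hreg : ∀ i, ∀ v : V, ((F i).neighborSet v).ncard = δ) :
    (simDomNum F : ℝ) ≤ ((k : ℝ) / (k + 1)) * n := by
  classical
  subst hn
  have hreg' : ∀ i v, ((F i).neighborFinset v).card = δ := by
    intro i v
    rw [show (F i).neighborFinset v = ((F i).neighborSet v).toFinset from rfl,
      ← Set.ncard_eq_toFinset_card']
    exact hreg i v
  obtain ⟨c, hgood⟩ := exists_good_coloring hδ F hreg'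
  obtain ⟨j, -, hj⟩ := Finset.exists_max_image (univ : Finset (Fin (k+1)))
    (fun j => (univ.filter fun u => c u = j).card) univ_nonempty
  set m := (univ.filter fun u => c u = j).card with hm
  have hsum : Fintype.card V = ∑ j : Fin (k+1), (univ.filter fun u => c u = j).card :=
    Finset.card_eq_sum_card_fiberwise (fun x _ => mem_univ (c x))
  have hmax : Fintype.card V ≤ (k+1) * m := by
    rw [hsum]
    calc ∑ j' : Fin (k+1), (univ.filter fun u => c u = j').card
        ≤ (univ : Finset (Fin (k+1))).card • m :=
          Finset.sum_le_card_nsmul _ _ _ (fun x _ => hj x (mem_univ x))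
      _ = (k+1) * m := by simp [smul_eq_mul]
  set S : Finset V := univ.filter fun u => ¬ c u = j with hS
  have hSdom : ∀ i, ∀ v ∉ S, ∃ u ∈ S, (F i).Adj v u := by
    intro i v hv
    simp only [hS, Finset.mem_filter, Finset.mem_univ, true_and, not_not] at hv
    obtain ⟨u, hadj, hne⟩ := hgood v i
    exact ⟨u, by simp [hS, hv ▸ hne], hadj⟩
  have hScard : m + S.card = Fintype.card V := by
    rw [hm, hS]
    exact Finset.card_filter_add_card_filter_not _
  have hle : simDomNum F ≤ S.card := Nat.sInf_le ⟨S, hSdom, rfl⟩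
  have h1 : (simDomNum F : ℝ) ≤ (S.card : ℝ) := Nat.cast_le.mpr hle
  refine h1.trans ?_
  have hm' : (Fintype.card V : ℝ) ≤ ((k : ℝ) + 1) * m := by exact_mod_cast hmax
  have hc' : (m : ℝ) + S.card = Fintype.card V := by exact_mod_cast hScard
  rw [div_mul_eq_mul_div, le_div_iff₀ (by positivity)]
  nlinarith [Nat.cast_nonneg (α := ℝ) S.card, Nat.cast_nonneg (α := ℝ) m,
    Nat.cast_nonneg (α := ℝ) k]
end

section
/- For r ≥ 2, let H be an r-uniform hypergraph with n vertices and m ≥ 1 edges in which every vertex lies in at least one edge, and let d = rm/n be its average degree. Then the transversal number of H satisfies τ(H) ≤ (1 − ((r−1)/r)·(1/d)^{1/(r−1)}) · n, and moreover this bound is at most n(ln(d) + 1)/r. -/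
/-!
Take a `p`-random set of vertices `S` and delete one vertex from every edge lying inside `S`:
what is left contains no edge, so its complement is a transversal, of expected size at most
`(1 - p) n + m p ^ r`. The choice `p = d ^ (-1 / (r - 1))` minimises this and gives the first bound;
the second is `1 - e ^ (-x) ≤ x` at `x = log d / (r - 1)`.
-/

/-- The transversal number of a hypergraph given by its (finite) edge set `E`:
the minimum cardinality of a set of vertices meeting every edge. -/
noncomputable def hyperTransversalNum {V : Type*} [Fintype V] [DecidableEq V]
    (E : Finset (Finset V)) : ℕ :=
  sInf {t | ∃ T : Finset V, (∀ e ∈ E, (T ∩ e).Nonempty) ∧ T.card = t}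

open Finset

lemma exists_le_sum_mul {ι : Type*} [Fintype ι] [Nonempty ι] {w : ι → ℝ} (hw : ∀ i, 0 ≤ w i)
    (hw₁ : ∑ i, w i = 1) (X : ι → ℝ) : ∃ i, X i ≤ ∑ j, w j * X j := by
  obtain ⟨i, -, hi⟩ := exists_min_image univ X univ_nonempty
  refine ⟨i, ?_⟩
  calc X i = ∑ j, w j * X i := by rw [← sum_mul, hw₁, one_mul]
    _ ≤ ∑ j, w j * X j :=
        sum_le_sum fun j _ ↦ mul_le_mul_of_nonneg_left (hi j (mem_univ j)) (hw j)

lemma exists_card_le_forall_inter_nonempty {V : Type*} [DecidableEq V] {F : Finset (Finset V)}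
    (hF : ∀ e ∈ F, e.Nonempty) : ∃ P : Finset V, #P ≤ #F ∧ ∀ e ∈ F, (P ∩ e).Nonempty := by
  choose pick hpick using hF
  refine ⟨F.attach.image fun e : {e // e ∈ F} ↦ pick e.1 e.2,
    card_image_le.trans card_attach.le, fun e he ↦ ?_⟩
  exact ⟨pick e he, mem_inter.2 ⟨mem_image_of_mem _ (mem_attach F ⟨e, he⟩), hpick e he⟩⟩

section Hypergraph

variable {V : Type*} [Fintype V] [DecidableEq V]

/-- The probability that a `p`-random subset of `V`, containing each vertex independently with
probability `p`, equals `S`. -/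
def bernoulliWeight (p : ℝ) (S : Finset V) : ℝ := p ^ #S * (1 - p) ^ #Sᶜ

lemma bernoulliWeight_nonneg {p : ℝ} (hp₀ : 0 ≤ p) (hp₁ : p ≤ 1) (S : Finset V) :
    0 ≤ bernoulliWeight p S :=
  mul_nonneg (pow_nonneg hp₀ _) (pow_nonneg (sub_nonneg.2 hp₁) _)

lemma sum_bernoulliWeight_superset (p : ℝ) (A : Finset V) :
    ∑ S, (if A ⊆ S then bernoulliWeight p S else 0) = p ^ #A := by
  -- expand `∏ v, (p + [v ∉ A] (1 - p))` in two ways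
  have hprod : ∏ v : V, (p + if v ∈ A then 0 else 1 - p) = p ^ #A := by
    simp only [add_ite, add_zero, add_sub_cancel, Fintype.prod_ite_mem, Finset.prod_const]
  rw [← hprod, Fintype.prod_add]
  refine sum_congr rfl fun S _ ↦ ?_
  simp only [Finset.prod_const, bernoulliWeight]
  split_ifs with hAS
  · rw [Finset.prod_congr rfl fun v hv ↦ if_neg fun hvA ↦ mem_compl.1 hv (hAS hvA),
      Finset.prod_const]
  · obtain ⟨v, hvA, hvS⟩ := not_subset.1 hAS
    rw [Finset.prod_eq_zero (mem_compl.2 hvS) (if_pos hvA : _ = (0 : ℝ)), mul_zero]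

lemma sum_bernoulliWeight (p : ℝ) : ∑ S : Finset V, bernoulliWeight p S = 1 := by
  simpa using sum_bernoulliWeight_superset p (∅ : Finset V)

lemma sum_bernoulliWeight_mul_card_filter_subset {ι : Type*} (p : ℝ) (s : Finset ι)
    (f : ι → Finset V) :
    ∑ S, bernoulliWeight p S * #{i ∈ s | f i ⊆ S} = ∑ i ∈ s, p ^ #(f i) := by
  simp only [card_filter, Nat.cast_sum, Nat.cast_ite, Nat.cast_one, Nat.cast_zero, mul_sum,
    mul_ite, mul_one, mul_zero]
  rw [sum_comm]
  exact sum_congr rfl fun i _ ↦ sum_bernoulliWeight_superset p (f i)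

lemma sum_bernoulliWeight_mul_card (p : ℝ) :
    ∑ S : Finset V, bernoulliWeight p S * #S = p * Fintype.card V := by
  simpa [mul_comm p] using sum_bernoulliWeight_mul_card_filter_subset p univ ({·} : V → Finset V)

lemma hyperTransversalNum_le_card {E : Finset (Finset V)} {T : Finset V}
    (hT : ∀ e ∈ E, (T ∩ e).Nonempty) : hyperTransversalNum E ≤ #T :=
  Nat.sInf_le ⟨T, hT, rfl⟩

/-- Alteration: `Sᶜ` together with one vertex from each edge inside `S` is a transversal. -/
lemma hyperTransversalNum_le_card_compl_add {E : Finset (Finset V)} (hE : ∀ e ∈ E, e.Nonempty)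
    (S : Finset V) : hyperTransversalNum E ≤ #Sᶜ + #{e ∈ E | e ⊆ S} := by
  obtain ⟨P, hPcard, hP⟩ := exists_card_le_forall_inter_nonempty (F := {e ∈ E | e ⊆ S})
    fun e he ↦ hE e (mem_filter.1 he).1
  calc hyperTransversalNum E ≤ #(Sᶜ ∪ P) := by
        refine hyperTransversalNum_le_card fun e he ↦ ?_
        by_cases heS : e ⊆ S
        · obtain ⟨v, hv⟩ := hP e (mem_filter.2 ⟨he, heS⟩)
          exact ⟨v, inter_subset_inter_right subset_union_right hv⟩
        · obtain ⟨v, hve, hvS⟩ := not_subset.1 heS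
          exact ⟨v, mem_inter.2 ⟨mem_union_left _ (mem_compl.2 hvS), hve⟩⟩
    _ ≤ #Sᶜ + #P := card_union_le _ _
    _ ≤ #Sᶜ + #{e ∈ E | e ⊆ S} := Nat.add_le_add_left hPcard _

theorem hyperTransversalNum_le_of_mem_Icc {p : ℝ} (hp₀ : 0 ≤ p) (hp₁ : p ≤ 1)
    {E : Finset (Finset V)} (hE : ∀ e ∈ E, e.Nonempty) :
    (hyperTransversalNum E : ℝ) ≤ (1 - p) * Fintype.card V + ∑ e ∈ E, p ^ #e := by
  obtain ⟨S, hS⟩ := exists_le_sum_mul (bernoulliWeight_nonneg hp₀ hp₁) (sum_bernoulliWeight p)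
    fun S ↦ (Fintype.card V - #S + #{e ∈ E | e ⊆ S} : ℝ)
  have hexp : ∑ S, bernoulliWeight p S * (Fintype.card V - #S + #{e ∈ E | e ⊆ S} : ℝ)
      = (1 - p) * Fintype.card V + ∑ e ∈ E, p ^ #e := by
    have hedges := sum_bernoulliWeight_mul_card_filter_subset p E id
    simp only [id] at hedges
    simp only [mul_add, mul_sub, sum_add_distrib, sum_sub_distrib, ← sum_mul,
      sum_bernoulliWeight, sum_bernoulliWeight_mul_card, hedges]
    ring
  calc (hyperTransversalNum E : ℝ) ≤ #Sᶜ + #{e ∈ E | e ⊆ S} := by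
        exact_mod_cast hyperTransversalNum_le_card_compl_add hE S
    _ = Fintype.card V - #S + #{e ∈ E | e ⊆ S} := by
        rw [card_compl, Nat.cast_sub (card_le_univ S)]
    _ ≤ _ := hexp ▸ hS

lemma card_le_card_mul_of_forall_exists_mem {E : Finset (Finset V)} {r : ℕ}
    (hE : ∀ e ∈ E, #e ≤ r) (hcover : ∀ v : V, ∃ e ∈ E, v ∈ e) : Fintype.card V ≤ #E * r :=
  calc Fintype.card V = #(E.biUnion id) := by
        rw [← card_univ, (eq_univ_iff_forall.2 fun v ↦ mem_biUnion.2 (hcover v) :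
          E.biUnion id = univ)]
    _ ≤ #E * r := card_biUnion_le_card_mul E id r hE

end Hypergraph

lemma rpow_one_div_natCast_sub_one_pow {x : ℝ} (hx : 0 ≤ x) {r : ℕ} (hr : 2 ≤ r) :
    (x ^ (1 / ((r : ℝ) - 1))) ^ (r - 1) = x := by
  have hcast : (r : ℝ) - 1 = ((r - 1 : ℕ) : ℝ) := by
    rw [Nat.cast_sub (by omega), Nat.cast_one]
  rw [hcast, one_div, Real.rpow_inv_natCast_pow hx (by omega)]

lemma mul_one_sub_one_div_rpow_le_log {d a : ℝ} (hd : 0 < d) (ha : 0 < a) :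
    a * (1 - (1 / d) ^ (1 / a)) ≤ Real.log d := by
  have hexp : (1 / d) ^ (1 / a) = Real.exp (-(Real.log d / a)) := by
    rw [Real.rpow_def_of_pos (by positivity), one_div d, Real.log_inv]
    ring_nf
  have h := Real.add_one_le_exp (-(Real.log d / a))
  rw [hexp]
  have : a * (Real.log d / a) = Real.log d := by field_simp
  nlinarith

theorem stmt3 {V : Type*} [Fintype V] [DecidableEq V] {r n m : ℕ} (hr : 2 ≤ r)
    (E : Finset (Finset V)) (hn : Fintype.card V = n) (hm : E.card = m)
    (hm1 : 1 ≤ m) (huniform : ∀ e ∈ E, e.card = r)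
    (hmindeg : ∀ v : V, ∃ e ∈ E, v ∈ e)
    (d : ℝ) (hd : d = (r : ℝ) * m / n) :
    (hyperTransversalNum E : ℝ) ≤
        (1 - (((r : ℝ) - 1) / r) * (1 / d) ^ ((1 : ℝ) / ((r : ℝ) - 1))) * n ∧
      (1 - (((r : ℝ) - 1) / r) * (1 / d) ^ ((1 : ℝ) / ((r : ℝ) - 1))) * n ≤
        n * (Real.log d + 1) / r := by
  have hE : ∀ e ∈ E, e.Nonempty := fun e he ↦ card_pos.1 (by rw [huniform e he]; omega)
  obtain ⟨e₀, he₀⟩ : E.Nonempty := card_pos.1 (by omega)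
  obtain ⟨v₀, -⟩ := hE e₀ he₀
  have hn₀ : (0 : ℝ) < n := by rw [← hn]; exact_mod_cast Fintype.card_pos_iff.2 ⟨v₀⟩
  have hr₁ : (0 : ℝ) < r - 1 := by
    rw [sub_pos, Nat.one_lt_cast]; omega
  have hd₁ : 1 ≤ d := by
    rw [hd, le_div_iff₀ hn₀, one_mul, ← hn, ← hm, mul_comm]
    exact_mod_cast card_le_card_mul_of_forall_exists_mem (fun e he ↦ (huniform e he).le) hmindeg
  set p := (1 / d) ^ ((1 : ℝ) / ((r : ℝ) - 1)) with hp
  have hp₁ : p ≤ 1 := Real.rpow_le_one (by positivity) (div_le_one_of_le₀ hd₁ (by positivity))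
    (by positivity)
  have hτ := hyperTransversalNum_le_of_mem_Icc (by positivity) hp₁ hE
  rw [sum_congr rfl fun e he ↦ by rw [huniform e he], sum_const, hm, hn, nsmul_eq_mul] at hτ
  constructor
  · have hpow : p ^ r = p / d := by
      rw [← Nat.sub_add_cancel (by omega : 1 ≤ r), pow_succ, hp,
        rpow_one_div_natCast_sub_one_pow (by positivity) hr]
      ring
    calc (hyperTransversalNum E : ℝ) ≤ (1 - p) * n + m * p ^ r := hτ
      _ = _ := by
        rw [hpow, hd]
        field_simp
        ring
  · have hlog := mul_one_sub_one_div_rpow_le_log (by positivity : 0 < d) hr₁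
    calc (1 - ((r : ℝ) - 1) / r * p) * n = n * (((r : ℝ) - 1) * (1 - p) + 1) / r := by
          field_simp
          ring
      _ ≤ n * (Real.log d + 1) / r := by gcongr
end

section
/- For k ≥ 2 and δ ≥ 1, let F_1, F_2, ..., F_k be graphs on a common finite vertex set of size n, each with minimum degree at least δ. Then the simultaneous domination number of F_1, ..., F_k is at most (1 − (δ/(δ+1))·(1/(k(δ+1)))^{1/δ}) · n. -/
open Finset

private lemma sum_pow_card {ι : Type*} [DecidableEq ι] (p q : ℝ) (s : Finset ι) :
    ∑ t ∈ s.powerset, p ^ t.card * q ^ (s \ t).card = (p + q) ^ s.card := by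
  have := Finset.prod_add (fun _ : ι => p) (fun _ : ι => q) s
  simpa [Finset.prod_const] using this.symm

set_option maxHeartbeats 1000000 in
theorem stmt4 {V : Type*} [Fintype V] {k n δ : ℕ} (hk : 2 ≤ k) (hδ : 1 ≤ δ)
    (hn : Fintype.card V = n) (F : Fin k → SimpleGraph V)
    (hmin : ∀ i, ∀ v : V, δ ≤ ((F i).neighborSet v).ncard) :
    (simDomNum F : ℝ) ≤
      (1 - ((δ : ℝ) / (δ + 1)) * (1 / ((k : ℝ) * (δ + 1))) ^ ((1 : ℝ) / δ)) * n := by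
  classical
  subst hn
  have hk1 : (2:ℝ) ≤ (k:ℝ) := by exact_mod_cast hk
  have hδ1 : (1:ℝ) ≤ (δ:ℝ) := by exact_mod_cast hδ
  have hδ0 : (0:ℝ) < (δ:ℝ) := by linarith
  set K : ℝ := (k:ℝ) * ((δ:ℝ) + 1) with hKdef
  have hKpos : (0:ℝ) < K := by positivity
  have hK1 : (1:ℝ) < K := by nlinarith
  set q : ℝ := (1 / K) ^ ((1:ℝ) / (δ:ℝ)) with hqdef
  have hq0 : 0 < q := Real.rpow_pos_of_pos (by positivity) _
  have hq1 : q < 1 :=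
    Real.rpow_lt_one (by positivity) ((div_lt_one hKpos).mpr hK1) (by positivity)
  have hqδ : q ^ δ = 1 / K := by
    rw [hqdef, ← Real.rpow_natCast ((1/K) ^ ((1:ℝ)/(δ:ℝ))) δ,
      ← Real.rpow_mul (by positivity), div_mul_cancel₀ 1 hδ0.ne', Real.rpow_one]
  set p : ℝ := 1 - q with hpdef
  have hp0 : 0 < p := by linarith
  have hpq : p + q = 1 := by ring
  set U : Finset V := Finset.univ with hU
  set B : ℝ := (1 - ((δ:ℝ) / ((δ:ℝ) + 1)) * q) * (Fintype.card V) with hB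
  -- the weight of a subset
  set w : Finset V → ℝ := fun X => p ^ X.card * q ^ (U \ X).card with hw
  have hw0 : ∀ X : Finset V, 0 < w X := fun X => by
    simp only [hw]; positivity
  have htotal : ∑ X ∈ U.powerset, w X = 1 := by
    simp only [hw]
    rw [sum_pow_card p q U, hpq, one_pow]
  -- the key expectation computation
  have hdisj : ∀ A : Finset V,
      ∑ X ∈ U.powerset, w X * (if Disjoint A X then (1:ℝ) else 0) = q ^ A.card := by
    intro A
    have hstep : ∀ X ∈ U.powerset, w X * (if Disjoint A X then (1:ℝ) else 0)
        = if Disjoint A X then w X else 0 := by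
      intro X _; split_ifs <;> simp
    rw [Finset.sum_congr rfl hstep, ← Finset.sum_filter]
    have hfil : U.powerset.filter (fun X => Disjoint A X) = (U \ A).powerset := by
      ext X
      simp only [Finset.mem_filter, Finset.mem_powerset, Finset.subset_sdiff]
      constructor
      · rintro ⟨h1, h2⟩; exact ⟨h1, h2.symm⟩
      · rintro ⟨h1, h2⟩; exact ⟨h1, h2.symm⟩
    rw [hfil]
    have hterm : ∀ X ∈ (U \ A).powerset,
        w X = (p ^ X.card * q ^ ((U \ A) \ X).card) * q ^ A.card := by
      intro X hX
      have hXs : X ⊆ U \ A := Finset.mem_powerset.mp hX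
      have hUX : U \ X = ((U \ A) \ X) ∪ A := by
        ext a
        simp only [Finset.mem_sdiff, Finset.mem_union, hU, Finset.mem_univ, true_and]
        constructor
        · intro ha
          by_cases h : a ∈ A
          · exact Or.inr h
          · exact Or.inl ⟨h, ha⟩
        · rintro (⟨-, h⟩ | h)
          · exact h
          · intro hx
            exact (Finset.mem_sdiff.mp (hXs hx)).2 h
      have hdis : Disjoint ((U \ A) \ X) A :=
        Finset.disjoint_of_subset_left (Finset.sdiff_subset) Finset.sdiff_disjoint
      simp only [hw]
      rw [hUX, Finset.card_union_of_disjoint hdis, pow_add, mul_assoc]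
    rw [Finset.sum_congr rfl hterm, ← Finset.sum_mul, sum_pow_card p q (U \ A), hpq,
      one_pow, one_mul]
  -- neighborhoods
  set N : Fin k → V → Finset V := fun i v => ((F i).neighborSet v).toFinset with hNdef
  have hN : ∀ i v u, u ∈ N i v ↔ (F i).Adj v u := by
    intro i v u; simp [hNdef]
  set A : Fin k → V → Finset V := fun i v => insert v (N i v) with hAdef
  have hAcard : ∀ i v, δ + 1 ≤ (A i v).card := by
    intro i v
    have hv : v ∉ N i v := by simp [hN i v v]
    have hNc : δ ≤ (N i v).card := by
      have := hmin i v
      rwa [Set.ncard_eq_toFinset_card'] at this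
    rw [hAdef]
    simp only
    rw [Finset.card_insert_of_notMem hv]
    omega
  -- the random dominating set
  set bad : Finset V → Finset V :=
    fun X => U.filter (fun v => ∃ i, Disjoint (A i v) X) with hbad
  set S : Finset V → Finset V := fun X => X ∪ bad X with hS
  have hSD : ∀ X : Finset V, ∀ i, ∀ v ∉ S X, ∃ u ∈ S X, (F i).Adj v u := by
    intro X i v hv
    rw [hS] at hv
    simp only [Finset.mem_union, not_or] at hv
    obtain ⟨hvX, hvb⟩ := hv
    have hnd : ¬ ∃ j, Disjoint (A j v) X := by
      intro h
      exact hvb (by simp [hbad, hU, h])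
    push_neg at hnd
    obtain ⟨u, hu1, hu2⟩ := Finset.not_disjoint_iff.mp (hnd i)
    have huv : u ≠ v := fun h => hvX (h ▸ hu2)
    have hu : u ∈ N i v := by
      rcases Finset.mem_insert.mp (by simpa [hAdef] using hu1) with h | h
      · exact absurd h huv
      · exact h
    exact ⟨u, Finset.mem_union_left _ hu2, (hN i v u).mp hu⟩
  -- pointwise bound on |S X|
  have hpoint : ∀ X : Finset V, ((S X).card : ℝ) ≤
      (∑ v ∈ U, (1 - (if Disjoint {v} X then (1:ℝ) else 0)))
      + ∑ v ∈ U, ∑ i : Fin k, (if Disjoint (A i v) X then (1:ℝ) else 0) := by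
    intro X
    have h1 : (X.card : ℝ) = ∑ v ∈ U, (1 - (if Disjoint {v} X then (1:ℝ) else 0)) := by
      have : ∀ v ∈ U, (1 - (if Disjoint {v} X then (1:ℝ) else 0))
          = if v ∈ X then (1:ℝ) else 0 := by
        intro v _
        by_cases h : v ∈ X <;> simp [Finset.disjoint_singleton_left, h]
      rw [Finset.sum_congr rfl this, Finset.sum_boole]
      have hfX : U.filter (fun v => v ∈ X) = X := by
        ext v; simp [hU]
      rw [hfX]
    have h2 : ((bad X).card : ℝ)
        ≤ ∑ v ∈ U, ∑ i : Fin k, (if Disjoint (A i v) X then (1:ℝ) else 0) := by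
      have hcardeq : ((bad X).card : ℝ)
          = ∑ v ∈ U, (if (∃ i, Disjoint (A i v) X) then (1:ℝ) else 0) := by
        rw [Finset.sum_boole]
      rw [hcardeq]
      apply Finset.sum_le_sum
      intro v _
      split_ifs with h
      · obtain ⟨i, hi⟩ := h
        have hle : (fun j => if Disjoint (A j v) X then (1:ℝ) else 0) i
            ≤ ∑ j : Fin k, (if Disjoint (A j v) X then (1:ℝ) else 0) :=
          Finset.single_le_sum (f := fun j : Fin k => if Disjoint (A j v) X then (1:ℝ) else 0)
            (fun j _ => by positivity) (Finset.mem_univ i)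
        simpa [hi] using hle
      · positivity
    have h3 : ((S X).card : ℝ) ≤ (X.card : ℝ) + ((bad X).card : ℝ) := by
      exact_mod_cast Finset.card_union_le X (bad X)
    rw [h1] at h3
    linarith
  -- expectation bound
  have hE : ∑ X ∈ U.powerset, w X * ((S X).card : ℝ) ≤ B := by
    have step1 : ∑ X ∈ U.powerset, w X * ((S X).card : ℝ)
        ≤ ∑ X ∈ U.powerset, w X *
          ((∑ v ∈ U, (1 - (if Disjoint {v} X then (1:ℝ) else 0)))
            + ∑ v ∈ U, ∑ i : Fin k, (if Disjoint (A i v) X then (1:ℝ) else 0)) := by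
      apply Finset.sum_le_sum
      intro X _
      exact mul_le_mul_of_nonneg_left (hpoint X) (hw0 X).le
    have step2 : ∑ X ∈ U.powerset, w X *
          ((∑ v ∈ U, (1 - (if Disjoint {v} X then (1:ℝ) else 0)))
            + ∑ v ∈ U, ∑ i : Fin k, (if Disjoint (A i v) X then (1:ℝ) else 0))
        = (∑ v ∈ U, (1 - q))
          + ∑ v ∈ U, ∑ i : Fin k, q ^ (A i v).card := by
      rw [Finset.sum_congr rfl (fun X _ => by rw [mul_add]), Finset.sum_add_distrib]
      congr 1
      · rw [Finset.sum_congr rfl (fun X _ => (Finset.mul_sum _ _ _)), Finset.sum_comm]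
        apply Finset.sum_congr rfl
        intro v _
        have : ∀ X ∈ U.powerset, w X * (1 - (if Disjoint {v} X then (1:ℝ) else 0))
            = w X - w X * (if Disjoint {v} X then (1:ℝ) else 0) := fun X _ => by ring
        rw [Finset.sum_congr rfl this, Finset.sum_sub_distrib, htotal, hdisj,
          Finset.card_singleton, pow_one]
      · rw [Finset.sum_congr rfl (fun X _ => (Finset.mul_sum _ _ _)), Finset.sum_comm]
        apply Finset.sum_congr rfl
        intro v _
        rw [Finset.sum_congr rfl (fun X _ => (Finset.mul_sum _ _ _)), Finset.sum_comm]
        exact Finset.sum_congr rfl fun i _ => hdisj (A i v)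
    have step3 : (∑ v ∈ U, (1 - q)) + ∑ v ∈ U, ∑ i : Fin k, q ^ (A i v).card ≤ B := by
      have hb : ∀ v ∈ U, ∑ i : Fin k, q ^ (A i v).card ≤ (k:ℝ) * q ^ (δ + 1) := by
        intro v _
        calc ∑ i : Fin k, q ^ (A i v).card ≤ ∑ _i : Fin k, q ^ (δ + 1) := by
              apply Finset.sum_le_sum
              intro i _
              exact pow_le_pow_of_le_one hq0.le hq1.le (hAcard i v)
          _ = (k:ℝ) * q ^ (δ + 1) := by
              rw [Finset.sum_const, Finset.card_univ, Fintype.card_fin, nsmul_eq_mul]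
      have : (∑ v ∈ U, (1 - q)) + ∑ v ∈ U, ∑ i : Fin k, q ^ (A i v).card
          ≤ (Fintype.card V : ℝ) * (1 - q) + (Fintype.card V : ℝ) * ((k:ℝ) * q ^ (δ + 1)) := by
        have e1 : (∑ v ∈ U, (1 - q)) = (Fintype.card V : ℝ) * (1 - q) := by
          rw [Finset.sum_const, nsmul_eq_mul, hU, Finset.card_univ]
        have e2 : ∑ v ∈ U, ∑ i : Fin k, q ^ (A i v).card
            ≤ ∑ v ∈ U, (k:ℝ) * q ^ (δ + 1) := Finset.sum_le_sum hb
        rw [e1]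
        have e3 : ∑ v ∈ U, (k:ℝ) * q ^ (δ + 1)
            = (Fintype.card V : ℝ) * ((k:ℝ) * q ^ (δ + 1)) := by
          rw [Finset.sum_const, nsmul_eq_mul, hU, Finset.card_univ]
        linarith [e2, e3.le]
      have hkey : (1 - q) + (k:ℝ) * q ^ (δ + 1) = 1 - ((δ:ℝ) / ((δ:ℝ) + 1)) * q := by
        rw [pow_succ, hqδ]
        rw [hKdef]
        field_simp
        ring
      rw [hB]
      calc (∑ v ∈ U, (1 - q)) + ∑ v ∈ U, ∑ i : Fin k, q ^ (A i v).card
          ≤ (Fintype.card V : ℝ) * (1 - q) + (Fintype.card V : ℝ) * ((k:ℝ) * q ^ (δ + 1)) :=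
            this
        _ = ((1 - q) + (k:ℝ) * q ^ (δ + 1)) * (Fintype.card V : ℝ) := by ring
        _ = (1 - ((δ:ℝ) / ((δ:ℝ) + 1)) * q) * (Fintype.card V : ℝ) := by rw [hkey]
    calc ∑ X ∈ U.powerset, w X * ((S X).card : ℝ) ≤ _ := step1
      _ = _ := step2
      _ ≤ B := step3
  -- extract a good subset
  have hex : ∃ X ∈ U.powerset, ((S X).card : ℝ) ≤ B := by
    by_contra hcon
    push_neg at hcon
    have hne : (U.powerset).Nonempty := Finset.powerset_nonempty U
    have hlt : ∑ X ∈ U.powerset, w X * B < ∑ X ∈ U.powerset, w X * ((S X).card : ℝ) :=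
      Finset.sum_lt_sum_of_nonempty hne
        (fun X hX => mul_lt_mul_of_pos_left (hcon X hX) (hw0 X))
    rw [← Finset.sum_mul, htotal, one_mul] at hlt
    linarith
  obtain ⟨X, -, hXle⟩ := hex
  have hmem : simDomNum F ≤ (S X).card :=
    Nat.sInf_le ⟨S X, hSD X, rfl⟩
  calc (simDomNum F : ℝ) ≤ ((S X).card : ℝ) := by exact_mod_cast hmem
    _ ≤ B := hXle
end

section
/- Let r and n be integers with 2 ≤ r ≤ n and r dividing n, and let k ≥ 2. If F_1, F_2, ..., F_k are graphs on a common vertex set of size n, each of which is the vertex-disjoint union of n/r copies of the complete graph K_r, then the simultaneous domination number of F_1, ..., F_k is at most (1 − ((r−1)/r)·(1/k)^{1/(r−1)}) · n, which is at most n(ln(k) + 1)/r. -/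
/-- `G` is the vertex-disjoint union of copies of `K_r`: the vertex set is
partitioned into blocks of size `r`, and two vertices are adjacent iff they are
distinct and lie in a common block. -/
def IsUnionCliques {V : Type*} [Fintype V] [DecidableEq V]
    (G : SimpleGraph V) (r : ℕ) : Prop :=
  ∃ P : Finpartition (Finset.univ : Finset V),
    (∀ b ∈ P.parts, b.card = r) ∧
    ∀ u v : V, G.Adj u v ↔ (u ≠ v ∧ ∃ b ∈ P.parts, u ∈ b ∧ v ∈ b)

open Finset

namespace Finset

variable {α : Type*} [DecidableEq α]

theorem sum_Icc_pow_mul_eq_pow_mul_add_pow {R : Type*} [CommSemiring R] {s t : Finset α}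
    (h : s ⊆ t) (a b : R) :
    ∑ u ∈ Icc s t, a ^ #u * b ^ (#t - #u) = a ^ #s * (a + b) ^ (#t - #s) := by
  have hdisj : ∀ u ∈ (t \ s).powerset, Disjoint s u := fun u hu =>
    disjoint_of_subset_right (mem_powerset.1 hu) disjoint_sdiff
  rw [Icc_eq_image_powerset h, sum_image fun u hu v hv huv => by
      rw [← union_sdiff_cancel_left (hdisj u hu), huv, union_sdiff_cancel_left (hdisj v hv)],
    ← card_sdiff_of_subset h, ← sum_pow_mul_eq_add_pow, mul_sum]
  refine sum_congr rfl fun u hu => ?_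
  rw [card_union_of_disjoint (hdisj u hu), card_sdiff_of_subset h, pow_add, mul_assoc,
    Nat.sub_add_eq]

theorem exists_hitting_set_card_le (B : Finset (Finset α)) (hB : ∀ b ∈ B, b.Nonempty) :
    ∃ R : Finset α, #R ≤ #B ∧ ∀ b ∈ B, ∃ x ∈ b, x ∈ R := by
  choose f hf using fun b : B => hB b.1 b.2
  exact ⟨univ.image f, card_image_le.trans (card_univ.trans (Fintype.card_coe B)).le,
    fun b hb => ⟨f ⟨b, hb⟩, hf _, mem_image_of_mem _ (mem_univ _)⟩⟩

theorem exists_le_sum_mul_of_sum_eq_one {ι : Type*} {s : Finset ι} {w f : ι → ℝ}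
    (hw : ∀ i ∈ s, 0 ≤ w i) (hsum : ∑ i ∈ s, w i = 1) :
    ∃ i ∈ s, f i ≤ ∑ j ∈ s, w j * f j := by
  set E := ∑ j ∈ s, w j * f j
  by_contra! hlt
  have hzero : ∑ i ∈ s, w i * (f i - E) = 0 := by
    simp only [mul_sub, sum_sub_distrib, ← sum_mul, hsum, one_mul, sub_self, E]
  rw [sum_eq_zero_iff_of_nonneg fun i hi => mul_nonneg (hw i hi) (sub_pos.2 (hlt i hi)).le]
    at hzero
  have : ∑ i ∈ s, w i = 0 := sum_eq_zero fun i hi =>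
    (mul_eq_zero.1 (hzero i hi)).resolve_right (sub_pos.2 (hlt i hi)).ne'
  linarith

end Finset

theorem Finpartition.card_parts_mul_eq_card {α : Type*} [DecidableEq α] {s : Finset α}
    (P : Finpartition s) {r : ℕ} (hP : ∀ b ∈ P.parts, #b = r) : #P.parts * r = #s := by
  rw [← P.sum_card_parts, sum_congr rfl hP, sum_const, smul_eq_mul]

section Sampling

variable {V : Type*} [Fintype V]

/-- The probability of the outcome `T` when every vertex is kept independently with
probability `q`. -/
def sampleWeight (q : ℝ) (T : Finset V) : ℝ := q ^ #T * (1 - q) ^ (Fintype.card V - #T)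

theorem sampleWeight_nonneg {q : ℝ} (hq₀ : 0 ≤ q) (hq₁ : q ≤ 1) (T : Finset V) :
    0 ≤ sampleWeight q T :=
  mul_nonneg (pow_nonneg hq₀ _) (pow_nonneg (sub_nonneg.2 hq₁) _)

theorem sum_sampleWeight (q : ℝ) : ∑ T : Finset V, sampleWeight q T = 1 := by
  simp [sampleWeight, Fintype.sum_pow_mul_eq_add_pow]

theorem sum_sampleWeight_superset [DecidableEq V] (q : ℝ) (A : Finset V) :
    ∑ T with A ⊆ T, sampleWeight q T = q ^ #A := by
  have : ({T | A ⊆ T} : Finset (Finset V)) = Icc A univ := by ext; simp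
  simp [this, sampleWeight, ← card_univ, sum_Icc_pow_mul_eq_pow_mul_add_pow (subset_univ A)]

theorem sum_sampleWeight_mul_card_filter [DecidableEq V] {ι : Type*} (q : ℝ) (I : Finset ι)
    (A : ι → Finset V) :
    ∑ T, sampleWeight q T * #{i ∈ I | A i ⊆ T} = ∑ i ∈ I, q ^ #(A i) := by
  simp_rw [card_filter, Nat.cast_sum, Nat.cast_ite, Nat.cast_one, Nat.cast_zero, mul_sum,
    mul_boole]
  rw [sum_comm]
  exact sum_congr rfl fun i _ => by rw [← sum_filter, sum_sampleWeight_superset]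

theorem sum_sampleWeight_mul_card [DecidableEq V] (q : ℝ) :
    ∑ T : Finset V, sampleWeight q T * #T = Fintype.card V * q := by
  simpa using sum_sampleWeight_mul_card_filter q univ (fun v : V => {v})

end Sampling

section Domination

variable {V : Type*} [Fintype V] [DecidableEq V]

theorem dominates_of_forall_part_meets {G : SimpleGraph V} (P : Finpartition (univ : Finset V))
    (hG : ∀ u v, G.Adj u v ↔ u ≠ v ∧ ∃ b ∈ P.parts, u ∈ b ∧ v ∈ b) {S : Finset V}
    (hS : ∀ b ∈ P.parts, ∃ u ∈ b, u ∈ S) : ∀ v ∉ S, ∃ u ∈ S, G.Adj v u := by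
  intro v hv
  obtain ⟨b, hb, hvb⟩ := P.exists_mem (mem_univ v)
  obtain ⟨u, hub, huS⟩ := hS b hb
  exact ⟨u, huS, (hG v u).2 ⟨fun h => hv (h ▸ huS), b, hb, hvb, hub⟩⟩

theorem simDomNum_le_card_compl_add_sum {k : ℕ} {F : Fin k → SimpleGraph V}
    (P : Fin k → Finpartition (univ : Finset V))
    (hP : ∀ i u v, (F i).Adj u v ↔ u ≠ v ∧ ∃ b ∈ (P i).parts, u ∈ b ∧ v ∈ b) (T : Finset V) :
    simDomNum F ≤ #Tᶜ + ∑ i, #{b ∈ (P i).parts | b ⊆ T} := by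
  choose R hRcard hR using fun i => exists_hitting_set_card_le {b ∈ (P i).parts | b ⊆ T}
    fun b hb => (P i).nonempty_of_mem_parts (mem_filter.1 hb).1
  have hdom : ∀ i, ∀ v ∉ Tᶜ ∪ univ.biUnion R, ∃ u ∈ Tᶜ ∪ univ.biUnion R, (F i).Adj v u := by
    refine fun i => dominates_of_forall_part_meets (P i) (hP i) fun b hb => ?_
    by_cases hbT : b ⊆ T
    · obtain ⟨x, hxb, hxR⟩ := hR i b (mem_filter.2 ⟨hb, hbT⟩)
      exact ⟨x, hxb, mem_union_right _ (mem_biUnion.2 ⟨i, mem_univ i, hxR⟩)⟩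
    · obtain ⟨x, hxb, hxT⟩ := not_subset.1 hbT
      exact ⟨x, hxb, mem_union_left _ (mem_compl.2 hxT)⟩
  calc simDomNum F ≤ #(Tᶜ ∪ univ.biUnion R) := Nat.sInf_le ⟨_, hdom, rfl⟩
    _ ≤ #Tᶜ + ∑ i, #(R i) := (card_union_le _ _).trans (by gcongr; exact card_biUnion_le)
    _ ≤ #Tᶜ + ∑ i, #{b ∈ (P i).parts | b ⊆ T} := by gcongr with i; exact hRcard i

theorem simDomNum_le_of_isUnionCliques {k r : ℕ} (hr : 0 < r) {F : Fin k → SimpleGraph V}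
    (hF : ∀ i, IsUnionCliques (F i) r) {q : ℝ} (hq₀ : 0 ≤ q) (hq₁ : q ≤ 1) :
    (simDomNum F : ℝ) ≤ Fintype.card V * (1 - q) + k * (Fintype.card V / r) * q ^ r := by
  choose P hPcard hP using hF
  have hblocks : ∀ i, ∑ b ∈ (P i).parts, q ^ #b = Fintype.card V / r * q ^ r := fun i => by
    rw [sum_congr rfl fun b hb => by rw [hPcard i b hb], sum_const, nsmul_eq_mul,
      ← card_univ, ← (P i).card_parts_mul_eq_card (hPcard i)]
    push_cast
    field_simp
  let size : Finset V → ℝ := fun T => #Tᶜ + ∑ i, (#{b ∈ (P i).parts | b ⊆ T} : ℝ)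
  have hexpect : ∑ T, sampleWeight q T * size T
      = Fintype.card V * (1 - q) + k * (Fintype.card V / r) * q ^ r := by
    simp only [size, card_compl, Nat.cast_sub (card_le_univ _), mul_add, mul_sub, mul_sum,
      sum_add_distrib, sum_sub_distrib, ← sum_mul, sum_sampleWeight, sum_sampleWeight_mul_card]
    rw [sum_comm]
    simp only [sum_sampleWeight_mul_card_filter, hblocks, sum_const, card_univ, Fintype.card_fin,
      nsmul_eq_mul]
    ring
  obtain ⟨T, -, hT⟩ := exists_le_sum_mul_of_sum_eq_one (f := size)
    (fun T _ => sampleWeight_nonneg hq₀ hq₁ T) (sum_sampleWeight q)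
  have hS : (simDomNum F : ℝ) ≤ size T := by
    simp only [size]
    exact_mod_cast simDomNum_le_card_compl_add_sum P hP T
  exact hS.trans (hexpect ▸ hT)

end Domination

theorem Real.one_sub_one_div_rpow_le_log_div {x : ℝ} (hx : 0 < x) (m : ℝ) :
    1 - (1 / x) ^ (1 / m) ≤ Real.log x / m := by
  rw [Real.rpow_def_of_pos (by positivity), one_div x, Real.log_inv]
  have := Real.add_one_le_exp (-Real.log x * (1 / m))
  rw [neg_mul, mul_one_div] at *
  linarith

theorem stmt5_general {V : Type*} [Fintype V] [DecidableEq V] {r n k : ℕ}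
    (hr : 2 ≤ r) (hn : Fintype.card V = n)
    (hk : 2 ≤ k) (F : Fin k → SimpleGraph V)
    (hF : ∀ i, IsUnionCliques (F i) r) :
    (simDomNum F : ℝ) ≤
        (1 - (((r : ℝ) - 1) / r) * (1 / (k : ℝ)) ^ ((1 : ℝ) / ((r : ℝ) - 1))) * n ∧
      (1 - (((r : ℝ) - 1) / r) * (1 / (k : ℝ)) ^ ((1 : ℝ) / ((r : ℝ) - 1))) * n ≤
        n * (Real.log k + 1) / r := by
  set q := (1 / (k : ℝ)) ^ ((1 : ℝ) / ((r : ℝ) - 1))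
  have hk₁ : (1 : ℝ) ≤ k := by exact_mod_cast (by omega : 1 ≤ k)
  have hr₁ : ((r - 1 : ℕ) : ℝ) = r - 1 := by rw [Nat.cast_sub (by omega), Nat.cast_one]
  have hr₀ : (0 : ℝ) < r - 1 := by rw [← hr₁]; exact_mod_cast (by omega : 0 < r - 1)
  have hq₀ : 0 ≤ q := by positivity
  have hq₁ : q ≤ 1 := Real.rpow_le_one (by positivity) (div_le_one_of_le₀ hk₁ (by positivity))
    (by positivity)
  -- This `q` minimises the bound `n (1 - q) + k (n / r) q ^ r`.
  have hqr : q ^ r = q / k := by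
    have hpow : q ^ (r - 1) = 1 / k := by
      rw [← Real.rpow_inv_natCast_pow (by positivity : (0 : ℝ) ≤ 1 / k) (by omega : r - 1 ≠ 0),
        hr₁, ← one_div]
    rw [← Nat.sub_add_cancel (by omega : 1 ≤ r), pow_succ, hpow]
    ring
  have hlog : ((r : ℝ) - 1) * (1 - q) ≤ Real.log k := by
    have := Real.one_sub_one_div_rpow_le_log_div (by positivity : (0 : ℝ) < k) (r - 1)
    rwa [le_div_iff₀ hr₀, mul_comm] at this
  have hr₂ : (0 : ℝ) < r := by linarith
  refine ⟨?_, ?_⟩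
  · calc (simDomNum F : ℝ) ≤ n * (1 - q) + k * (n / r) * q ^ r :=
          hn ▸ simDomNum_le_of_isUnionCliques (by omega) hF hq₀ hq₁
      _ = (1 - ((r - 1) / r) * q) * n := by
          rw [hqr]
          field_simp
          ring
  · rw [le_div_iff₀ hr₂]
    calc (1 - ((r - 1) / r) * q) * n * r = n * ((r - 1) * (1 - q) + 1) := by
          field_simp
          ring
      _ ≤ n * (Real.log k + 1) := by gcongr

theorem stmt5 {V : Type*} [Fintype V] [DecidableEq V] {r n k : ℕ}
    (hr : 2 ≤ r) (hrn : r ≤ n) (hdvd : r ∣ n) (hn : Fintype.card V = n)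
    (hk : 2 ≤ k) (F : Fin k → SimpleGraph V)
    (hF : ∀ i, IsUnionCliques (F i) r) :
    (simDomNum F : ℝ) ≤
        (1 - (((r : ℝ) - 1) / r) * (1 / (k : ℝ)) ^ ((1 : ℝ) / ((r : ℝ) - 1))) * n ∧
      (1 - (((r : ℝ) - 1) / r) * (1 / (k : ℝ)) ^ ((1 : ℝ) / ((r : ℝ) - 1))) * n ≤
        n * (Real.log k + 1) / r :=
  stmt5_general hr hn hk F hF
end

section
/- Let F be a graph of order r in which every vertex belongs to some minimum dominating set of F (a 1-extendable-dominated graph). Let n be an integer with r ≤ n and r dividing n. If F_1 and F_2 are graphs on a common vertex set of size n, each of which is the vertex-disjoint union of n/r copies of F, then the simultaneous domination number of F_1 and F_2 is at most (2γ(F) − 1)·n/r, where γ(F) is the domination number of F. -/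
/-- The domination number of a graph. -/
noncomputable def domNum {V : Type*} [Fintype V] (F : SimpleGraph V) : ℕ :=
  sInf {m | ∃ S : Finset V, (∀ v ∉ S, ∃ u ∈ S, F.Adj v u) ∧ S.card = m}

/-- `G` is the vertex-disjoint union of copies of the graph `H`: the vertex set
partitions into blocks, the induced subgraph on each block is isomorphic to `H`,
and there are no edges between blocks. -/
def IsDisjointUnionCopies {V W : Type*} [Fintype V] [DecidableEq V]
    (G : SimpleGraph V) (H : SimpleGraph W) : Prop :=
  ∃ P : Finpartition (Finset.univ : Finset V),
    (∀ b ∈ P.parts, Nonempty (G.induce (↑b : Set V) ≃g H)) ∧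
    ∀ u v : V, G.Adj u v → ∃ b ∈ P.parts, u ∈ b ∧ v ∈ b

lemma block_card {V W : Type*} [Fintype V] [Fintype W] (G : SimpleGraph V)
    (F : SimpleGraph W) (b : Finset V) (e : G.induce (↑b : Set V) ≃g F) :
    b.card = Fintype.card W := by
  classical
  rw [← Fintype.card_coe]
  exact Fintype.card_congr e.toEquiv

lemma block_dom {V W : Type*} [Fintype W] [DecidableEq V] (G : SimpleGraph V) (F : SimpleGraph W)
    (b : Finset V) (e : G.induce (↑b : Set V) ≃g F)
    (hext : ∀ v : W, ∃ S : Finset W,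
      (∀ u ∉ S, ∃ w ∈ S, F.Adj u w) ∧ S.card = domNum F ∧ v ∈ S)
    (x : V) (hx : x ∈ b) :
    ∃ D : Finset V, D ⊆ b ∧ D.card = domNum F ∧ x ∈ D ∧
      ∀ v ∈ b, v ∉ D → ∃ u ∈ D, G.Adj v u := by
  classical
  have hxs : x ∈ (↑b : Set V) := by simpa using hx
  obtain ⟨S, hSdom, hScard, hxS⟩ := hext (e ⟨x, hxs⟩)
  refine ⟨S.image (fun w => ((e.symm w : (↑b : Set V)) : V)), ?_, ?_, ?_, ?_⟩
  · intro v hv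
    simp only [Finset.mem_image] at hv
    obtain ⟨w, _, rfl⟩ := hv
    simpa using (e.symm w).2
  · rw [Finset.card_image_of_injective _ (fun a c h => by
      apply e.symm.injective; exact Subtype.ext h)]
    exact hScard
  · exact Finset.mem_image.2 ⟨e ⟨x, hxs⟩, hxS, by simp⟩
  · intro v hvb hvD
    have hvs : v ∈ (↑b : Set V) := by simpa using hvb
    have hvS : e ⟨v, hvs⟩ ∉ S := by
      intro h
      exact hvD (Finset.mem_image.2 ⟨e ⟨v, hvs⟩, h, by simp⟩)
    obtain ⟨w, hwS, hadj⟩ := hSdom _ hvS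
    refine ⟨(e.symm w : (↑b : Set V)), Finset.mem_image.2 ⟨w, hwS, rfl⟩, ?_⟩
    have : F.Adj (e ⟨v, hvs⟩) (e (e.symm w)) := by simpa using hadj
    exact e.map_adj_iff.mp this

lemma parts_card_mul {V : Type*} [Fintype V] [DecidableEq V] {r : ℕ}
    (P : Finpartition (Finset.univ : Finset V))
    (hP : ∀ b ∈ P.parts, b.card = r) :
    P.parts.card * r = Fintype.card V := by
  have := P.sum_card_parts
  rw [Finset.sum_congr rfl hP, Finset.sum_const, smul_eq_mul] at this
  simpa [Finset.card_univ] using this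

lemma hall_two_partitions {V : Type*} [Fintype V] [DecidableEq V] {r : ℕ} (hr : 0 < r)
    (P Q : Finpartition (Finset.univ : Finset V))
    (hP : ∀ b ∈ P.parts, b.card = r) (hQ : ∀ b ∈ Q.parts, b.card = r) :
    ∃ f : {a // a ∈ P.parts} → {b // b ∈ Q.parts}, Function.Bijective f ∧
      ∀ a : {a // a ∈ P.parts}, ((a : Finset V) ∩ (f a : Finset V)).Nonempty := by
  classical
  set t : {a // a ∈ P.parts} → Finset (Finset V) :=
    fun a => Q.parts.filter (fun b => ((a : Finset V) ∩ b).Nonempty) with ht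
  have hall : ∀ s : Finset {a // a ∈ P.parts}, s.card ≤ (s.biUnion t).card := by
    intro s
    have hdisj : ∀ a ∈ s, ∀ a' ∈ s, a ≠ a' →
        Disjoint ((a : {a // a ∈ P.parts}) : Finset V) ((a' : Finset V)) := by
      intro a _ a' _ hne
      exact P.supIndep.pairwiseDisjoint a.2 a'.2 (fun h => hne (Subtype.ext h))
    have hU : (s.biUnion (fun a => (a : Finset V))).card = s.card * r := by
      rw [Finset.card_biUnion hdisj]
      rw [Finset.sum_congr rfl (fun a _ => hP _ a.2), Finset.sum_const, smul_eq_mul]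
    have hsub : s.biUnion (fun a => (a : Finset V)) ⊆ (s.biUnion t).biUnion id := by
      intro u hu
      simp only [Finset.mem_biUnion] at hu ⊢
      obtain ⟨a, has, hua⟩ := hu
      obtain ⟨b, hbQ, hub⟩ := Q.exists_mem (Finset.mem_univ u)
      refine ⟨b, ⟨a, has, ?_⟩, hub⟩
      simp only [ht, Finset.mem_filter]
      exact ⟨hbQ, ⟨u, Finset.mem_inter.2 ⟨hua, hub⟩⟩⟩
    have hcard2 : ((s.biUnion t).biUnion id).card ≤ (s.biUnion t).card * r := by
      refine le_trans Finset.card_biUnion_le (le_of_eq ?_)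
      rw [show (s.biUnion t).card * r = ∑ _b ∈ s.biUnion t, r by
        rw [Finset.sum_const, smul_eq_mul]]
      refine Finset.sum_congr rfl ?_
      intro b hb
      simp only [Finset.mem_biUnion, ht, Finset.mem_filter] at hb
      obtain ⟨a, _, hbQ, _⟩ := hb
      exact hQ _ hbQ
    have := le_trans (le_of_eq hU.symm) (le_trans (Finset.card_le_card hsub) hcard2)
    exact Nat.le_of_mul_le_mul_right this hr
  obtain ⟨f, hfinj, hft⟩ := (Finset.all_card_le_biUnion_card_iff_exists_injective t).1 hall
  have hmem : ∀ a : {a // a ∈ P.parts}, f a ∈ Q.parts ∧ ((a : Finset V) ∩ f a).Nonempty := by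
    intro a
    have := hft a
    simp only [ht, Finset.mem_filter] at this
    exact this
  set g : {a // a ∈ P.parts} → {b // b ∈ Q.parts} := fun a => ⟨f a, (hmem a).1⟩ with hg
  have hginj : Function.Injective g := by
    intro a a' h
    exact hfinj (by simpa [hg, Subtype.ext_iff] using h)
  have hcard : Fintype.card {a // a ∈ P.parts} = Fintype.card {b // b ∈ Q.parts} := by
    rw [Fintype.card_coe, Fintype.card_coe]
    have h1 := parts_card_mul P hP
    have h2 := parts_card_mul Q hQ
    exact Nat.eq_of_mul_eq_mul_right hr (h1.trans h2.symm)
  exact ⟨g, (Fintype.bijective_iff_injective_and_card g).2 ⟨hginj, hcard⟩,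
    fun a => (hmem a).2⟩

theorem stmt6 {W V : Type*} [Fintype W] [Fintype V] [DecidableEq V] {r n : ℕ}
    (F : SimpleGraph W) (hr : Fintype.card W = r)
    (hext : ∀ v : W, ∃ S : Finset W,
      (∀ u ∉ S, ∃ w ∈ S, F.Adj u w) ∧ S.card = domNum F ∧ v ∈ S)
    (hrn : r ≤ n) (hdvd : r ∣ n) (hn : Fintype.card V = n)
    (F₁ F₂ : SimpleGraph V)
    (h1 : IsDisjointUnionCopies F₁ F) (h2 : IsDisjointUnionCopies F₂ F) :
    (simDomNum ![F₁, F₂] : ℝ) ≤ (2 * (domNum F : ℝ) - 1) * n / r := by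
  classical
  obtain ⟨P, hP1, -⟩ := h1
  obtain ⟨Q, hQ1, -⟩ := h2
  by_cases hr0 : r = 0
  · subst hr0
    have hn0 : n = 0 := by simpa using hdvd
    have hVem : IsEmpty V := Fintype.card_eq_zero_iff.mp (hn.trans hn0)
    have hzero : simDomNum ![F₁, F₂] = 0 := by
      apply Nat.eq_zero_of_le_zero
      exact Nat.sInf_le ⟨∅, fun i v _ => (hVem.false v).elim, Finset.card_empty⟩
    rw [hzero, hn0]
    simp
  have hrpos : 0 < r := Nat.pos_of_ne_zero hr0
  set γ := domNum F with hγ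
  -- γ ≥ 1
  have hWne : Nonempty W := by
    rw [← Fintype.card_pos_iff, hr]; exact hrpos
  obtain ⟨w0⟩ := hWne
  have hγpos : 1 ≤ γ := by
    obtain ⟨S0, hS0, hS0card, hw0⟩ := hext w0
    by_contra h
    have : S0 = ∅ := Finset.card_eq_zero.1 (by omega)
    simp [this] at hw0
  -- block sizes
  have hPcard : ∀ b ∈ P.parts, b.card = r := by
    intro b hb
    obtain ⟨e⟩ := hP1 b hb
    rw [block_card F₁ F b e, hr]
  have hQcard : ∀ b ∈ Q.parts, b.card = r := by
    intro b hb
    obtain ⟨e⟩ := hQ1 b hb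
    rw [block_card F₂ F b e, hr]
  have hPn : P.parts.card = n / r := by
    have h := (parts_card_mul P hPcard).trans hn
    rw [← h, Nat.mul_div_cancel _ hrpos]
  have hQn : Q.parts.card = n / r := by
    have h := (parts_card_mul Q hQcard).trans hn
    rw [← h, Nat.mul_div_cancel _ hrpos]
  -- Hall
  obtain ⟨σ, ⟨σinj, σsurj⟩, hσ⟩ := hall_two_partitions hrpos P Q hPcard hQcard
  choose v hv using hσ
  choose τ hτ using σsurj
  -- dominating sets per block
  have hD : ∀ a : {a // a ∈ P.parts}, ∃ D : Finset V, D ⊆ (a : Finset V) ∧ D.card = γ ∧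
      v a ∈ D ∧ ∀ x ∈ (a : Finset V), x ∉ D → ∃ u ∈ D, F₁.Adj x u := by
    intro a
    exact block_dom F₁ F a (hP1 a a.2).some hext (v a) (Finset.mem_inter.1 (hv a)).1
  choose D hDsub hDcard hDv hDdom using hD
  have hE : ∀ b : {b // b ∈ Q.parts}, ∃ E : Finset V, E ⊆ (b : Finset V) ∧ E.card = γ ∧
      v (τ b) ∈ E ∧ ∀ x ∈ (b : Finset V), x ∉ E → ∃ u ∈ E, F₂.Adj x u := by
    intro b
    apply block_dom F₂ F b (hQ1 b b.2).some hext (v (τ b))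
    have h2 := (Finset.mem_inter.1 (hv (τ b))).2
    rw [hτ b] at h2
    exact h2
  choose E hEsub hEcard hEv hEdom using hE
  set D₁ : Finset V := Finset.univ.biUnion (fun a : {a // a ∈ P.parts} => D a) with hD₁
  set EU : Finset V := Finset.univ.biUnion (fun b : {b // b ∈ Q.parts} => E b) with hEU
  set S : Finset V := D₁ ∪ EU with hS
  -- S dominates F₁
  have hdom1 : ∀ x ∉ S, ∃ u ∈ S, F₁.Adj x u := by
    intro x hx
    obtain ⟨a, haP, hxa⟩ := P.exists_mem (Finset.mem_univ x)
    have hxD : x ∉ D ⟨a, haP⟩ := by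
      intro h
      exact hx (Finset.mem_union_left _
        (Finset.mem_biUnion.2 ⟨⟨a, haP⟩, Finset.mem_univ _, h⟩))
    obtain ⟨u, huD, hadj⟩ := hDdom ⟨a, haP⟩ x hxa hxD
    exact ⟨u, Finset.mem_union_left _
      (Finset.mem_biUnion.2 ⟨⟨a, haP⟩, Finset.mem_univ _, huD⟩), hadj⟩
  have hdom2 : ∀ x ∉ S, ∃ u ∈ S, F₂.Adj x u := by
    intro x hx
    obtain ⟨b, hbQ, hxb⟩ := Q.exists_mem (Finset.mem_univ x)
    have hxE : x ∉ E ⟨b, hbQ⟩ := by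
      intro h
      exact hx (Finset.mem_union_right _
        (Finset.mem_biUnion.2 ⟨⟨b, hbQ⟩, Finset.mem_univ _, h⟩))
    obtain ⟨u, huE, hadj⟩ := hEdom ⟨b, hbQ⟩ x hxb hxE
    exact ⟨u, Finset.mem_union_right _
      (Finset.mem_biUnion.2 ⟨⟨b, hbQ⟩, Finset.mem_univ _, huE⟩), hadj⟩
  -- cardinality bound
  have hD₁card : D₁.card ≤ (n / r) * γ := by
    refine le_trans Finset.card_biUnion_le ?_
    rw [Finset.sum_congr rfl (fun a _ => hDcard a), Finset.sum_const, smul_eq_mul,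
      Finset.card_univ, Fintype.card_coe, hPn]
  have hEUcard : (EU \ D₁).card ≤ (n / r) * (γ - 1) := by
    have hsub : EU \ D₁ ⊆ Finset.univ.biUnion
        (fun b : {b // b ∈ Q.parts} => E b \ D₁) := by
      intro x hx
      rw [Finset.mem_sdiff] at hx
      obtain ⟨hx1, hx2⟩ := hx
      rw [hEU, Finset.mem_biUnion] at hx1
      obtain ⟨b, -, hxb⟩ := hx1
      exact Finset.mem_biUnion.2 ⟨b, Finset.mem_univ _, Finset.mem_sdiff.2 ⟨hxb, hx2⟩⟩
    refine le_trans (Finset.card_le_card hsub) (le_trans Finset.card_biUnion_le ?_)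
    have hone : ∀ b : {b // b ∈ Q.parts}, (E b \ D₁).card ≤ γ - 1 := by
      intro b
      have hvD₁ : v (τ b) ∈ D₁ :=
        Finset.mem_biUnion.2 ⟨τ b, Finset.mem_univ _, hDv (τ b)⟩
      have hsub2 : E b \ D₁ ⊆ (E b).erase (v (τ b)) := by
        intro x hx
        rw [Finset.mem_sdiff] at hx
        refine Finset.mem_erase.2 ⟨?_, hx.1⟩
        rintro rfl
        exact hx.2 hvD₁
      calc (E b \ D₁).card ≤ ((E b).erase (v (τ b))).card := Finset.card_le_card hsub2
        _ = γ - 1 := by rw [Finset.card_erase_of_mem (hEv b), hEcard b]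
    calc ∑ b : {b // b ∈ Q.parts}, (E b \ D₁).card
        ≤ ∑ _b : {b // b ∈ Q.parts}, (γ - 1) := Finset.sum_le_sum (fun b _ => hone b)
      _ = (n / r) * (γ - 1) := by
          rw [Finset.sum_const, smul_eq_mul, Finset.card_univ, Fintype.card_coe, hQn]
  have hScard : S.card ≤ (2 * γ - 1) * (n / r) := by
    have h1 : S.card ≤ D₁.card + (EU \ D₁).card := by
      rw [hS, ← Finset.union_sdiff_self_eq_union]
      exact Finset.card_union_le _ _
    have h2 : S.card ≤ (n / r) * γ + (n / r) * (γ - 1) := by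
      omega
    calc S.card ≤ (n / r) * γ + (n / r) * (γ - 1) := h2
      _ = (2 * γ - 1) * (n / r) := by
          obtain ⟨γ', hγ'⟩ : ∃ γ', γ = γ' + 1 := ⟨γ - 1, by omega⟩
          rw [hγ', show 2 * (γ' + 1) - 1 = 2 * γ' + 1 from by omega,
            Nat.add_sub_cancel]
          ring
  -- conclude
  have hle : simDomNum ![F₁, F₂] ≤ (2 * γ - 1) * (n / r) := by
    refine le_trans (Nat.sInf_le ⟨S, ?_, rfl⟩) hScard
    intro i x hx
    fin_cases i
    · exact hdom1 x hx
    · exact hdom2 x hx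
  have hrR : (r : ℝ) ≠ 0 := Nat.cast_ne_zero.2 hr0
  calc (simDomNum ![F₁, F₂] : ℝ) ≤ (((2 * γ - 1) * (n / r) : ℕ) : ℝ) := Nat.cast_le.2 hle
    _ = (2 * (γ : ℝ) - 1) * ((n : ℝ) / r) := by
        rw [Nat.cast_mul, Nat.cast_div hdvd hrR, Nat.cast_sub (by omega : 1 ≤ 2 * γ)]
        push_cast
        ring
    _ = (2 * (γ : ℝ) - 1) * n / r := by ring
end

section
/- Let r and n be integers with 1 ≤ r ≤ n and r dividing n. If F_1 and F_2 are graphs on a common vertex set of size n, each of which is the vertex-disjoint union of n/r copies of the complete graph K_r, then the simultaneous domination number of F_1 and F_2 equals exactly n/r. -/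
open Finset

section aux
variable {V : Type*} [Fintype V] [DecidableEq V]

lemma aux_parts_card_mul (P : Finpartition (Finset.univ : Finset V)) {r : ℕ}
    (hP : ∀ b ∈ P.parts, b.card = r) : P.parts.card * r = Fintype.card V := by
  have h := P.sum_card_parts
  rw [Finset.sum_congr rfl hP, Finset.sum_const, smul_eq_mul] at h
  simpa [Finset.card_univ] using h

lemma aux_lower {G : SimpleGraph V} (P : Finpartition (Finset.univ : Finset V))
    (hadj : ∀ u v : V, G.Adj u v ↔ (u ≠ v ∧ ∃ b ∈ P.parts, u ∈ b ∧ v ∈ b))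
    {S : Finset V} (hS : ∀ v ∉ S, ∃ u ∈ S, G.Adj v u) :
    P.parts.card ≤ S.card := by
  have key : ∀ b ∈ P.parts, ∃ x, x ∈ b ∩ S := by
    intro b hb
    obtain ⟨v, hv⟩ := P.nonempty_of_mem_parts hb
    by_cases hvS : v ∈ S
    · exact ⟨v, mem_inter.2 ⟨hv, hvS⟩⟩
    · obtain ⟨u, huS, hadj'⟩ := hS v hvS
      rw [hadj] at hadj'
      obtain ⟨hne, b', hb', hvb', hub'⟩ := hadj'
      have : b' = b := P.eq_of_mem_parts hb' hb hvb' hv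
      exact ⟨u, mem_inter.2 ⟨this ▸ hub', huS⟩⟩
  choose x hx using key
  have := Finset.card_le_card_of_injOn (f := fun b : {b // b ∈ P.parts} => x b.1 b.2)
    (s := P.parts.attach) (t := S)
    (fun b _ => (mem_inter.1 (hx b.1 b.2)).2)
    (by
      intro b _ b' _ h
      have h1 : x b.1 b.2 ∈ b.1 := (mem_inter.1 (hx b.1 b.2)).1
      have h2 : x b'.1 b'.2 ∈ b'.1 := (mem_inter.1 (hx b'.1 b'.2)).1
      have heq : x b.1 b.2 = x b'.1 b'.2 := h
      rw [heq] at h1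
      exact Subtype.ext (P.eq_of_mem_parts b.2 b'.2 h1 h2))
  simpa using this

lemma aux_dominates {G : SimpleGraph V} (P : Finpartition (Finset.univ : Finset V))
    (hadj : ∀ u v : V, G.Adj u v ↔ (u ≠ v ∧ ∃ b ∈ P.parts, u ∈ b ∧ v ∈ b))
    {S : Finset V} (hhit : ∀ b ∈ P.parts, ∃ x ∈ S, x ∈ b) :
    ∀ v ∉ S, ∃ u ∈ S, G.Adj v u := by
  intro v hv
  obtain ⟨b, hb, hvb⟩ := P.exists_mem (mem_univ v)
  obtain ⟨u, huS, hub⟩ := hhit b hb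
  refine ⟨u, huS, (hadj v u).2 ⟨?_, b, hb, hvb, hub⟩⟩
  rintro rfl; exact hv huS

lemma aux_transversal (P Q : Finpartition (Finset.univ : Finset V)) {r : ℕ} (hr : 1 ≤ r)
    (hP : ∀ b ∈ P.parts, b.card = r) (hQ : ∀ b ∈ Q.parts, b.card = r) :
    ∃ S : Finset V, S.card = P.parts.card ∧ (∀ b ∈ P.parts, ∃ x ∈ S, x ∈ b)
      ∧ (∀ c ∈ Q.parts, ∃ x ∈ S, x ∈ c) := by
  classical
  set t : {b // b ∈ P.parts} → Finset (Finset V) :=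
    fun b => Q.parts.filter (fun c => (b.1 ∩ c).Nonempty) with ht
  have hall : ∀ s : Finset {b // b ∈ P.parts}, s.card ≤ (s.biUnion t).card := by
    intro s
    set U : Finset V := s.biUnion (fun b => b.1) with hU
    have hUcard : U.card = s.card * r := by
      rw [hU, Finset.card_biUnion, Finset.sum_congr rfl (fun b _ => hP b.1 b.2),
        Finset.sum_const, smul_eq_mul]
      intro b _ b' _ hne
      exact P.disjoint b.2 b'.2 (fun h => hne (Subtype.ext h))
    have hsub : U ⊆ (s.biUnion t).biUnion id := by
      intro v hv
      obtain ⟨b, hbs, hvb⟩ := Finset.mem_biUnion.1 hv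
      obtain ⟨c, hc, hvc⟩ := Q.exists_mem (mem_univ v)
      refine Finset.mem_biUnion.2 ⟨c, Finset.mem_biUnion.2 ⟨b, hbs, ?_⟩, hvc⟩
      exact Finset.mem_filter.2 ⟨hc, ⟨v, mem_inter.2 ⟨hvb, hvc⟩⟩⟩
    have h2 : ((s.biUnion t).biUnion id).card ≤ (s.biUnion t).card * r := by
      refine le_trans (Finset.card_biUnion_le) ?_
      rw [← smul_eq_mul, ← Finset.sum_const]
      refine Finset.sum_le_sum ?_
      intro c hc
      obtain ⟨b, _, hcb⟩ := Finset.mem_biUnion.1 hc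
      exact le_of_eq (hQ c (Finset.mem_filter.1 hcb).1)
    have := le_trans (le_of_eq hUcard.symm) (le_trans (Finset.card_le_card hsub) h2)
    exact Nat.le_of_mul_le_mul_right this hr
  obtain ⟨f, hfinj, hf⟩ := (Finset.all_card_le_biUnion_card_iff_exists_injective t).1 hall
  have hfQ : ∀ b, f b ∈ Q.parts := fun b => (Finset.mem_filter.1 (hf b)).1
  have hfmeet : ∀ b, (b.1 ∩ f b).Nonempty := fun b => (Finset.mem_filter.1 (hf b)).2
  -- f is surjective onto Q.parts
  set g : {b // b ∈ P.parts} → {c // c ∈ Q.parts} := fun b => ⟨f b, hfQ b⟩ with hg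
  have hginj : Function.Injective g := by
    intro b b' h
    exact hfinj (congrArg Subtype.val h)
  have hcards : Fintype.card {b // b ∈ P.parts} = Fintype.card {c // c ∈ Q.parts} := by
    rw [Fintype.card_coe, Fintype.card_coe]
    have h1 := aux_parts_card_mul P hP
    have h2 := aux_parts_card_mul Q hQ
    exact Nat.eq_of_mul_eq_mul_right hr (h1.trans h2.symm)
  have hgsurj : Function.Surjective g :=
    ((Fintype.bijective_iff_injective_and_card g).2 ⟨hginj, hcards⟩).2
  -- choose representatives
  set x : {b // b ∈ P.parts} → V := fun b => (hfmeet b).choose with hxdef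
  have hx : ∀ b, x b ∈ b.1 ∩ f b := fun b => (hfmeet b).choose_spec
  have hxinj : Function.Injective x := by
    intro b b' h
    have h1 : x b ∈ b.1 := (mem_inter.1 (hx b)).1
    have h2 : x b' ∈ b'.1 := (mem_inter.1 (hx b')).1
    rw [h] at h1
    exact Subtype.ext (P.eq_of_mem_parts b.2 b'.2 h1 h2)
  refine ⟨Finset.univ.image x, ?_, ?_, ?_⟩
  · rw [Finset.card_image_of_injective _ hxinj, Finset.card_univ, Fintype.card_coe]
  · intro b hb
    exact ⟨x ⟨b, hb⟩, Finset.mem_image.2 ⟨⟨b, hb⟩, mem_univ _, rfl⟩,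
      (mem_inter.1 (hx ⟨b, hb⟩)).1⟩
  · intro c hc
    obtain ⟨b, hb⟩ := hgsurj ⟨c, hc⟩
    refine ⟨x b, Finset.mem_image.2 ⟨b, mem_univ _, rfl⟩, ?_⟩
    have : f b = c := congrArg Subtype.val hb
    exact this ▸ (mem_inter.1 (hx b)).2

end aux

theorem stmt7 {V : Type*} [Fintype V] [DecidableEq V] {r n : ℕ}
    (hr : 1 ≤ r) (hrn : r ≤ n) (hdvd : r ∣ n) (hn : Fintype.card V = n)
    (F₁ F₂ : SimpleGraph V)
    (h1 : IsUnionCliques F₁ r) (h2 : IsUnionCliques F₂ r) :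
    simDomNum ![F₁, F₂] = n / r := by
  obtain ⟨P, hP, hadj1⟩ := h1
  obtain ⟨Q, hQ, hadj2⟩ := h2
  have hPn : P.parts.card * r = n := by rw [aux_parts_card_mul P hP, hn]
  have hk : n / r = P.parts.card := by
    rw [← hPn, Nat.mul_div_cancel _ hr]
  obtain ⟨S, hScard, hSP, hSQ⟩ := aux_transversal P Q hr hP hQ
  have hmem : n / r ∈ {m | ∃ S : Finset V,
      (∀ i, ∀ v ∉ S, ∃ u ∈ S, ((![F₁, F₂]) i).Adj v u) ∧ S.card = m} := by
    refine ⟨S, ?_, by rw [hScard, hk]⟩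
    intro i
    fin_cases i
    · simpa using aux_dominates P hadj1 hSP
    · simpa using aux_dominates Q hadj2 hSQ
  refine le_antisymm (Nat.sInf_le hmem) (le_csInf ⟨_, hmem⟩ ?_)
  rintro m ⟨S', hS', rfl⟩
  have := aux_lower P hadj1 (by simpa using hS' 0)
  omega
end

section
/- Let r and n be integers with 1 ≤ r ≤ n and r dividing n. If F_1 and F_2 are graphs on a common vertex set of size n, each of which contains a spanning subgraph that is the vertex-disjoint union of n/r copies of the complete graph K_r, then the simultaneous domination number of F_1 and F_2 is at most n/r. -/
/-- `G` contains a spanning subgraph that is the vertex-disjoint union of copies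
of `K_r`: the vertex set partitions into blocks of size `r` such that any two
distinct vertices in a common block are adjacent in `G`. -/
def HasSpanningUnionCliques {V : Type*} [Fintype V] [DecidableEq V]
    (G : SimpleGraph V) (r : ℕ) : Prop :=
  ∃ P : Finpartition (Finset.univ : Finset V),
    (∀ b ∈ P.parts, b.card = r) ∧
    ∀ b ∈ P.parts, ∀ u ∈ b, ∀ v ∈ b, u ≠ v → G.Adj u v

theorem stmt8 {V : Type*} [Fintype V] [DecidableEq V] {r n : ℕ}
    (hr : 1 ≤ r) (hrn : r ≤ n) (hdvd : r ∣ n) (hn : Fintype.card V = n)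
    (F₁ F₂ : SimpleGraph V)
    (h1 : HasSpanningUnionCliques F₁ r) (h2 : HasSpanningUnionCliques F₂ r) :
    simDomNum ![F₁, F₂] ≤ n / r := by
  classical
  obtain ⟨P, hPcard, hPadj⟩ := h1
  obtain ⟨Q, hQcard, hQadj⟩ := h2
  have hPn : P.parts.card * r = n := by
    have := P.sum_card_parts
    rw [Finset.sum_congr rfl hPcard, Finset.sum_const, smul_eq_mul] at this
    simpa [hn] using this
  have hPdiv : P.parts.card = n / r := (Nat.div_eq_of_eq_mul_left hr hPn.symm).symm
  have hQn : Q.parts.card * r = n := by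
    have := Q.sum_card_parts
    rw [Finset.sum_congr rfl hQcard, Finset.sum_const, smul_eq_mul] at this
    simpa [hn] using this
  have hQdiv : Q.parts.card = n / r := (Nat.div_eq_of_eq_mul_left hr hQn.symm).symm
  set ι := {b // b ∈ P.parts}
  set t : ι → Finset (Finset V) :=
    fun b => Q.parts.filter (fun c => ((b : Finset V) ∩ c).Nonempty) with ht
  -- Hall's condition
  have hall : ∀ A : Finset ι, A.card ≤ (A.biUnion t).card := by
    intro A
    have hdisj : ∀ b ∈ A, ∀ b' ∈ A, b ≠ b' →
        Disjoint ((b : ι) : Finset V) ((b' : ι) : Finset V) := by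
      intro b _ b' _ hne
      exact P.disjoint b.2 b'.2 (fun h => hne (Subtype.ext h))
    have hU : (A.biUnion (fun b => (b : Finset V))).card = A.card * r := by
      rw [Finset.card_biUnion hdisj]
      rw [Finset.sum_congr rfl (fun b _ => hPcard _ b.prop), Finset.sum_const, smul_eq_mul]
    have hsub : A.biUnion (fun b => (b : Finset V)) ⊆ (A.biUnion t).biUnion id := by
      intro x hx
      obtain ⟨b, hbA, hxb⟩ := Finset.mem_biUnion.mp hx
      obtain ⟨c, hc, hxc⟩ := Q.exists_mem (Finset.mem_univ x)
      refine Finset.mem_biUnion.mpr ⟨c, Finset.mem_biUnion.mpr ⟨b, hbA, ?_⟩, hxc⟩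
      exact Finset.mem_filter.mpr ⟨hc, ⟨x, Finset.mem_inter.mpr ⟨hxb, hxc⟩⟩⟩
    have hUB : ((A.biUnion t).biUnion id).card ≤ (A.biUnion t).card * r := by
      calc ((A.biUnion t).biUnion id).card ≤ ∑ c ∈ A.biUnion t, (id c).card :=
            Finset.card_biUnion_le
        _ = (A.biUnion t).card * r := by
            rw [Finset.sum_congr rfl (fun c hc => ?_), Finset.sum_const, smul_eq_mul]
            obtain ⟨b, _, hcb⟩ := Finset.mem_biUnion.mp hc
            exact hQcard c (Finset.mem_filter.mp hcb).1
    have : A.card * r ≤ (A.biUnion t).card * r := by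
      calc A.card * r = (A.biUnion (fun b => (b : Finset V))).card := hU.symm
        _ ≤ ((A.biUnion t).biUnion id).card := Finset.card_le_card hsub
        _ ≤ (A.biUnion t).card * r := hUB
    exact Nat.le_of_mul_le_mul_right this hr
  obtain ⟨f, hfinj, hft⟩ := (Finset.all_card_le_biUnion_card_iff_exists_injective t).mp hall
  have hfQ : ∀ b : ι, f b ∈ Q.parts := fun b => (Finset.mem_filter.mp (hft b)).1
  have hx : ∀ b : ι, ∃ v, v ∈ (b : Finset V) ∧ v ∈ f b := by
    intro b
    obtain ⟨v, hv⟩ := (Finset.mem_filter.mp (hft b)).2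
    exact ⟨v, Finset.mem_inter.mp hv⟩
  choose x hx1 hx2 using hx
  have hxinj : Function.Injective x := by
    intro b b' h
    exact Subtype.ext (P.eq_of_mem_parts b.2 b'.2 (hx1 b) (h ▸ hx1 b'))
  set S : Finset V := Finset.univ.image x with hS
  have hcardι : Fintype.card ι = P.parts.card := Fintype.card_coe _
  have hScard : S.card = n / r := by
    rw [hS, Finset.card_image_of_injective _ hxinj, Finset.card_univ, hcardι]
    omega
  -- f is surjective onto Q.parts
  have hfsurj : Finset.univ.image f = Q.parts := by
    apply Finset.eq_of_subset_of_card_le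
    · intro c hc
      obtain ⟨b, _, rfl⟩ := Finset.mem_image.mp hc
      exact hfQ b
    · rw [Finset.card_image_of_injective _ hfinj, Finset.card_univ, hcardι]
      omega
  have hdom : ∀ i : Fin 2, ∀ v ∉ S, ∃ u ∈ S, ((![F₁, F₂]) i).Adj v u := by
    intro i v hvS
    have hmemS : ∀ b : ι, x b ∈ S := fun b =>
      Finset.mem_image.mpr ⟨b, Finset.mem_univ b, rfl⟩
    fin_cases i
    · -- F₁
      obtain ⟨b, hb, hvb⟩ := P.exists_mem (Finset.mem_univ v)
      refine ⟨x ⟨b, hb⟩, hmemS _, ?_⟩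
      have hne : v ≠ x ⟨b, hb⟩ := fun h => hvS (h ▸ hmemS ⟨b, hb⟩)
      simpa using hPadj b hb v hvb (x ⟨b, hb⟩) (hx1 ⟨b, hb⟩) hne
    · -- F₂
      obtain ⟨c, hc, hvc⟩ := Q.exists_mem (Finset.mem_univ v)
      obtain ⟨b, _, hfb⟩ := Finset.mem_image.mp (hfsurj ▸ hc)
      refine ⟨x b, hmemS _, ?_⟩
      have hne : v ≠ x b := fun h => hvS (h ▸ hmemS b)
      have hxc : x b ∈ c := hfb ▸ hx2 b
      simpa using hQadj c hc v hvc (x b) hxc hne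
  exact Nat.sInf_le ⟨S, hdom, hScard⟩
end

section
/- Let n be even and let F_1 and F_2 be graphs on a common vertex set of size n, both of which have a perfect matching (a 1-factor). Then the simultaneous domination number of F_1 and F_2 is at most n/2. Moreover, if the maximum of the domination numbers γ(F_1) and γ(F_2) equals n/2, then the simultaneous domination number of F_1 and F_2 equals exactly n/2. -/
open Finset Function Equiv

theorem Function.Involutive.exists_set_mem_iff_apply_notMem {α : Type*} {φ : α → α}
    (hφ : Involutive φ) (hφ' : ∀ a, φ a ≠ a) : ∃ P : Set α, ∀ a, a ∈ P ↔ φ a ∉ P := by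
  refine ⟨{a | WellOrderingRel a (φ a)}, fun a => ?_⟩
  show WellOrderingRel a (φ a) ↔ ¬WellOrderingRel (φ a) (φ (φ a))
  rw [hφ a]
  rcases trichotomous_of WellOrderingRel a (φ a) with h | h | h
  · exact iff_of_true h (asymm h)
  · exact absurd h.symm (hφ' a)
  · exact iff_of_false (asymm h) (not_not.2 h)

namespace Equiv.Perm

variable {α : Type*} {f g : Perm α} (hf : Involutive f) (hg : Involutive g)
include hf hg

omit hg in
theorem mul_apply_apply_self (a : α) : (g * f) (f a) = g a := by
  rw [Perm.mul_apply, hf a]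

theorem apply_mul_zpow_apply (k : ℤ) (a : α) :
    f (((g * f) ^ k) a) = ((g * f) ^ (-k)) (f a) := by
  have hf₁ : f⁻¹ = f := Involutive.symm_eq_self_of_involutive f hf
  have hg₁ : g⁻¹ = g := Involutive.symm_eq_self_of_involutive g hg
  have hsemiconj : SemiconjBy f (g * f) (g * f)⁻¹ := by
    rw [SemiconjBy, mul_inv_rev, hf₁, hg₁, mul_assoc]
  rw [← Perm.mul_apply, (hsemiconj.zpow_right k).eq, inv_zpow, zpow_neg, Perm.mul_apply]

theorem not_sameCycle_apply (hf' : ∀ a, f a ≠ a) (hg' : ∀ a, g a ≠ a) (a : α) :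
    ¬SameCycle (g * f) a (f a) := by
  rintro ⟨k, hk⟩
  obtain ⟨j, rfl | rfl⟩ := k.even_or_odd'
  · refine hf' (((g * f) ^ j) a) ?_
    rw [apply_mul_zpow_apply hf hg, ← hk, ← Perm.mul_apply, ← zpow_add]
    congr 2; ring
  · refine hg' (((g * f) ^ (j + 1)) a) ?_
    rw [← mul_apply_apply_self hf, apply_mul_zpow_apply hf hg, ← hk, ← Perm.mul_apply,
      ← Perm.mul_apply, ← zpow_one_add, ← zpow_add]
    congr 2; ring

omit hg in
theorem sameCycle_apply_apply (a : α) : SameCycle (g * f) (f a) (g a) :=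
  ⟨1, by rw [zpow_one, mul_apply_apply_self hf]⟩

theorem exists_common_set_mem_iff_apply_notMem (hf' : ∀ a, f a ≠ a) (hg' : ∀ a, g a ≠ a) :
    ∃ S : Set α, (∀ a, a ∈ S ↔ f a ∉ S) ∧ ∀ a, a ∈ S ↔ g a ∉ S := by
  let s := SameCycle.setoid (g * f)
  have hresp : ∀ a b, SameCycle (g * f) a b → SameCycle (g * f) (f a) (f b) := by
    rintro a b ⟨k, rfl⟩
    exact ⟨-k, (apply_mul_zpow_apply hf hg k a).symm⟩
  let φ : Quotient s → Quotient s := Quotient.map f hresp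
  have hφ : Involutive φ := by
    rintro ⟨a⟩
    exact congrArg (Quotient.mk s) (hf a)
  have hφ' : ∀ q, φ q ≠ q := by
    rintro ⟨a⟩ h
    exact not_sameCycle_apply hf hg hf' hg' a (Quotient.exact h).symm
  obtain ⟨P, hP⟩ := hφ.exists_set_mem_iff_apply_notMem hφ'
  refine ⟨{a | Quotient.mk s a ∈ P}, fun a => hP _, fun a => ?_⟩
  have hga : Quotient.mk s (g a) = φ (Quotient.mk s a) :=
    Quotient.sound (sameCycle_apply_apply hf a).symm
  show _ ∈ P ↔ Quotient.mk s (g a) ∉ P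
  rw [hga]
  exact hP _

end Equiv.Perm

theorem two_mul_card_eq_card_of_mem_iff_apply_notMem {α : Type*} [Fintype α] [DecidableEq α]
    {f : α → α} (hf : Injective f) {S : Finset α} (hS : ∀ a, a ∈ S ↔ f a ∉ S) :
    2 * #S = Fintype.card α := by
  have hS_le : #S ≤ #Sᶜ :=
    card_le_card_of_injOn f (fun a ha => mem_compl.2 ((hS a).1 ha)) hf.injOn
  have hSc_le : #Sᶜ ≤ #S :=
    card_le_card_of_injOn f (fun a ha => not_not.1 (mt (hS a).2 (mem_compl.1 ha))) hf.injOn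
  have := card_add_card_compl S
  omega

namespace SimpleGraph

variable {V : Type*}

theorem Subgraph.IsPerfectMatching.exists_involutive_perm {G : SimpleGraph V} {M : G.Subgraph}
    (hM : M.IsPerfectMatching) : ∃ f : Perm V, Involutive f ∧ ∀ v, G.Adj v (f v) := by
  choose w hw using Subgraph.isPerfectMatching_iff.1 hM
  have hw_inv : Involutive w := fun v => ((hw (w v)).2 v (hw v).1.symm).symm
  exact ⟨hw_inv.toPerm, hw_inv, fun v => M.adj_sub (hw v).1⟩

def IsDominatingSet (G : SimpleGraph V) (S : Finset V) : Prop :=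
  ∀ v ∉ S, ∃ u ∈ S, G.Adj v u

theorem IsDominatingSet.of_mem_iff_apply_notMem {G : SimpleGraph V} {f : V → V}
    (hf : ∀ v, G.Adj v (f v)) {S : Finset V} (hS : ∀ v, v ∈ S ↔ f v ∉ S) :
    G.IsDominatingSet S :=
  fun v hv => ⟨f v, not_not.1 (mt (hS v).2 hv), hf v⟩

end SimpleGraph

section DominationNumbers

open SimpleGraph

variable {V : Type*} [Fintype V] {k : ℕ}

theorem simDomNum_le_card {F : Fin k → SimpleGraph V} {S : Finset V}
    (hS : ∀ i, (F i).IsDominatingSet S) : simDomNum F ≤ #S :=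
  Nat.sInf_le ⟨S, hS, rfl⟩

theorem exists_card_eq_simDomNum (F : Fin k → SimpleGraph V) :
    ∃ S : Finset V, (∀ i, (F i).IsDominatingSet S) ∧ #S = simDomNum F :=
  Nat.sInf_mem (s := {m | ∃ S : Finset V, (∀ i, (F i).IsDominatingSet S) ∧ #S = m})
    ⟨#univ, univ, fun _ v hv => absurd (mem_univ v) hv, rfl⟩

theorem domNum_le_simDomNum (F : Fin k → SimpleGraph V) (i : Fin k) :
    domNum (F i) ≤ simDomNum F := by
  obtain ⟨S, hS, hcard⟩ := exists_card_eq_simDomNum F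
  exact hcard ▸ Nat.sInf_le ⟨S, hS i, rfl⟩

end DominationNumbers

theorem stmt9_general {V : Type*} [Fintype V] {n : ℕ} (hn : Fintype.card V = n)
    (F₁ F₂ : SimpleGraph V)
    (h1 : ∃ M : F₁.Subgraph, M.IsPerfectMatching)
    (h2 : ∃ M : F₂.Subgraph, M.IsPerfectMatching) :
    simDomNum ![F₁, F₂] ≤ n / 2 ∧
      (max (domNum F₁) (domNum F₂) = n / 2 → simDomNum ![F₁, F₂] = n / 2) := by
  classical
  obtain ⟨f, hf, hf_adj⟩ := h1.choose_spec.exists_involutive_perm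
  obtain ⟨g, hg, hg_adj⟩ := h2.choose_spec.exists_involutive_perm
  obtain ⟨S, hSf, hSg⟩ := Perm.exists_common_set_mem_iff_apply_notMem hf hg
    (fun v => (hf_adj v).ne') (fun v => (hg_adj v).ne')
  simp_rw [← Set.mem_toFinset] at hSf hSg
  have hcard : 2 * #S.toFinset = n :=
    hn ▸ two_mul_card_eq_card_of_mem_iff_apply_notMem f.injective hSf
  have hdom : ∀ i, (![F₁, F₂] i).IsDominatingSet S.toFinset := Fin.forall_fin_two.2
    ⟨.of_mem_iff_apply_notMem hf_adj hSf, .of_mem_iff_apply_notMem hg_adj hSg⟩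
  have hle : simDomNum ![F₁, F₂] ≤ n / 2 := (simDomNum_le_card hdom).trans (by omega)
  refine ⟨hle, fun hmax => hle.antisymm ?_⟩
  rw [← hmax]
  exact max_le (domNum_le_simDomNum ![F₁, F₂] 0) (domNum_le_simDomNum ![F₁, F₂] 1)

theorem stmt9 {V : Type*} [Fintype V] {n : ℕ} (hn : Fintype.card V = n)
    (heven : Even n) (F₁ F₂ : SimpleGraph V)
    (h1 : ∃ M : F₁.Subgraph, M.IsPerfectMatching)
    (h2 : ∃ M : F₂.Subgraph, M.IsPerfectMatching) :
    simDomNum ![F₁, F₂] ≤ n / 2 ∧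
      (max (domNum F₁) (domNum F₂) = n / 2 → simDomNum ![F₁, F₂] = n / 2) :=
  stmt9_general hn F₁ F₂ h1 h2
end

section
/- For k ≥ 2 and n even, let F_1, F_2, ..., F_k be graphs on a common vertex set of size n, each of which is 1-regular (i.e., each F_i is a perfect matching). Then the simultaneous domination number of F_1, ..., F_k is at most ((k−1)/k) · n when k is even, and at most (k/(k+1)) · n when k is odd. -/
open Finset SimpleGraph

/-- A walk-closed finset contains everything reachable from its members. -/
lemma closedReach {V : Type*} (G : SimpleGraph V) (B : Finset V)
    (hB : ∀ x ∈ B, ∀ y, G.Adj x y → y ∈ B) {u w : V} (h : G.Reachable u w)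
    (hu : u ∈ B) : w ∈ B := by
  obtain ⟨p⟩ := h
  induction p with
  | nil => exact hu
  | cons hadj p ih => exact ih (hB _ hu _ hadj)

/-- A finset closed under a fixed-point-free involution has even cardinality. -/
lemma evenCardInv {V : Type*} [DecidableEq V] (f : V → V) :
    ∀ A : Finset V, (∀ x ∈ A, f x ∈ A) → (∀ x ∈ A, f (f x) = x) →
      (∀ x ∈ A, f x ≠ x) → Even A.card := by
  intro A
  induction A using Finset.strongInduction with
  | _ A ih =>
    intro h1 h2 h3
    rcases A.eq_empty_or_nonempty with rfl | ⟨a, ha⟩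
    · simp
    · have hfa : f a ∈ A := h1 a ha
      have hne : f a ≠ a := h3 a ha
      set A' : Finset V := A \ {a, f a} with hA'
      have hsub : A' ⊆ A := Finset.sdiff_subset
      have hss : A' ⊂ A := by
        refine Finset.ssubset_iff_of_subset hsub |>.mpr ⟨a, ha, ?_⟩
        simp [hA']
      have hEv : Even A'.card := by
        refine ih A' hss ?_ ?_ ?_
        · intro x hx
          have hxA : x ∈ A := hsub hx
          have hx' := Finset.mem_sdiff.mp hx
          simp only [Finset.mem_insert, Finset.mem_singleton] at hx'
          refine Finset.mem_sdiff.mpr ⟨h1 x hxA, ?_⟩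
          simp only [Finset.mem_insert, Finset.mem_singleton]
          push_neg
          constructor
          · intro hfx
            apply hx'.2
            have : f (f x) = f a := by rw [hfx]
            rw [h2 x hxA] at this
            exact Or.inr this
          · intro hfx
            apply hx'.2
            have : f (f x) = f (f a) := by rw [hfx]
            rw [h2 x hxA, h2 a ha] at this
            exact Or.inl this
        · intro x hx; exact h2 x (hsub hx)
        · intro x hx; exact h3 x (hsub hx)
      have hpair : ({a, f a} : Finset V) ⊆ A := by
        intro x hx
        simp only [Finset.mem_insert, Finset.mem_singleton] at hx
        rcases hx with rfl | rfl
        · exact ha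
        · exact hfa
      have hpaircard : ({a, f a} : Finset V).card = 2 := by
        rw [Finset.card_insert_of_notMem (by
          simp only [Finset.mem_singleton]; exact fun h => hne h.symm),
          Finset.card_singleton]
      have hcard : A'.card = A.card - 2 := by
        rw [hA', Finset.card_sdiff_of_subset hpair, hpaircard]
      have h2le : 2 ≤ A.card := by
        calc 2 = ({a, f a} : Finset V).card := hpaircard.symm
          _ ≤ A.card := Finset.card_le_card hpair
      obtain ⟨r, hr⟩ := hEv
      exact ⟨r + 1, by omega⟩

/-- Degenerate graphs have large independent sets. -/
lemma indepLemma {V : Type*} [DecidableEq V] (G : SimpleGraph V) (N : V → Finset V)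
    (hN : ∀ v u, G.Adj v u → u ∈ N v) (d : ℕ) :
    ∀ A : Finset V, (∀ B ⊆ A, B.Nonempty → ∃ v ∈ B, (B ∩ N v).card < d) →
      ∃ I ⊆ A, (∀ x ∈ I, ∀ y ∈ I, ¬ G.Adj x y) ∧ A.card ≤ d * I.card := by
  intro A
  induction A using Finset.strongInduction with
  | _ A ih =>
    intro hA
    rcases A.eq_empty_or_nonempty with rfl | hAne
    · exact ⟨∅, by simp⟩
    · obtain ⟨v, hv, hvcard⟩ := hA A Finset.Subset.rfl hAne
      set R : Finset V := insert v (A ∩ N v) with hR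
      set A' : Finset V := A \ R with hA'
      have hvR : v ∈ R := Finset.mem_insert_self _ _
      have hsub : A' ⊆ A := Finset.sdiff_subset
      have hss : A' ⊂ A := by
        refine Finset.ssubset_iff_of_subset hsub |>.mpr ⟨v, hv, ?_⟩
        simp [hA', hvR]
      obtain ⟨I, hIsub, hIindep, hIcard⟩ := ih A' hss
        (fun B hB hBne => hA B (hB.trans hsub) hBne)
      have hvA' : v ∉ A' := by simp [hA', hvR]
      have hvI : v ∉ I := fun h => hvA' (hIsub h)
      refine ⟨insert v I, ?_, ?_, ?_⟩
      · intro x hx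
        rcases Finset.mem_insert.mp hx with rfl | hx
        · exact hv
        · exact hsub (hIsub hx)
      · have hnoadj : ∀ w ∈ I, ¬ G.Adj v w := by
          intro w hw hadj
          have hwA' := hIsub hw
          have hwA := hsub hwA'
          have : w ∈ R := Finset.mem_insert_of_mem (Finset.mem_inter.mpr ⟨hwA, hN v w hadj⟩)
          exact (Finset.mem_sdiff.mp hwA').2 this
        intro x hx y hy hadj2
        rcases Finset.mem_insert.mp hx with hxv | hxI <;>
          rcases Finset.mem_insert.mp hy with hyv | hyI
        · rw [hxv, hyv] at hadj2; exact G.irrefl hadj2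
        · rw [hxv] at hadj2; exact hnoadj y hyI hadj2
        · rw [hyv] at hadj2; exact hnoadj x hxI hadj2.symm
        · exact hIindep x hxI y hyI hadj2
      · have hRcard : R.card ≤ d := by
          calc R.card ≤ (A ∩ N v).card + 1 := Finset.card_insert_le _ _
            _ ≤ d := by omega
        have hAcard : A.card ≤ A'.card + R.card := by
          calc A.card ≤ (A' ∪ R).card := Finset.card_le_card (by
                intro x hx
                by_cases hxR : x ∈ R
                · exact Finset.mem_union_right _ hxR
                · exact Finset.mem_union_left _ (Finset.mem_sdiff.mpr ⟨hx, hxR⟩))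
            _ ≤ A'.card + R.card := Finset.card_union_le _ _
        rw [Finset.card_insert_of_notMem hvI, Nat.mul_add, Nat.mul_one]
        omega

theorem stmt13 {V : Type*} [Fintype V] {k n : ℕ} (hk : 2 ≤ k)
    (hn : Fintype.card V = n) (heven : Even n)
    (F : Fin k → SimpleGraph V)
    (hreg : ∀ i, ∀ v : V, ((F i).neighborSet v).ncard = 1) :
    (Even k → (simDomNum F : ℝ) ≤ (((k : ℝ) - 1) / k) * n) ∧
      (Odd k → (simDomNum F : ℝ) ≤ ((k : ℝ) / (k + 1)) * n) := by
  classical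
  haveI : NeZero k := ⟨by omega⟩
  set G : SimpleGraph V := ⨆ i, F i with hGdef
  have hex : ∀ i (v : V), ∃ u, (F i).neighborSet v = {u} :=
    fun i v => Set.ncard_eq_one.mp (hreg i v)
  choose p hp using hex
  have hadj : ∀ i (v u : V), (F i).Adj v u ↔ u = p i v := by
    intro i v u
    constructor
    · intro h
      have : u ∈ (F i).neighborSet v := h
      rwa [hp i v, Set.mem_singleton_iff] at this
    · rintro rfl
      have : p i v ∈ (F i).neighborSet v := by rw [hp i v]; exact rfl
      exact this
  have hGadj : ∀ v u : V, G.Adj v u ↔ ∃ i, (F i).Adj v u := fun v u => iSup_adj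
  set N : V → Finset V := fun v => Finset.image (fun i => p i v) Finset.univ with hNdef
  have hN : ∀ v u : V, G.Adj v u → u ∈ N v := by
    intro v u h
    obtain ⟨i, hi⟩ := (hGadj v u).mp h
    exact Finset.mem_image.mpr ⟨i, Finset.mem_univ i, ((hadj i v u).mp hi).symm⟩
  have hNcard : ∀ v : V, (N v).card ≤ k := by
    intro v
    calc (N v).card ≤ (Finset.univ : Finset (Fin k)).card := Finset.card_image_le
      _ = k := by simp
  have key : ∀ I : Finset V, (∀ x ∈ I, ∀ y ∈ I, ¬ G.Adj x y) →
      simDomNum F ≤ n - I.card := by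
    intro I hI
    apply Nat.sInf_le
    refine ⟨Iᶜ, ?_, by rw [Finset.card_compl, hn]⟩
    intro i v hv
    rw [Finset.mem_compl, not_not] at hv
    refine ⟨p i v, ?_, (hadj i v _).mpr rfl⟩
    rw [Finset.mem_compl]
    intro hmem
    exact hI v hv (p i v) hmem ((hGadj v _).mpr ⟨i, (hadj i v _).mpr rfl⟩)
  have hIcard_le : ∀ I : Finset V, I.card ≤ n := by
    intro I; rw [← hn]; exact Finset.card_le_univ I
  constructor
  · -- Even case
    intro hkeven
    haveI : Finite G.ConnectedComponent :=
      Finite.of_surjective G.connectedComponentMk Quot.exists_rep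
    haveI : Fintype G.ConnectedComponent := Fintype.ofFinite _
    set q : V → G.ConnectedComponent := G.connectedComponentMk with hq
    have hsum : ∑ c : G.ConnectedComponent,
        (Finset.univ.filter (fun v => q v = c)).card = n := by
      rw [← hn, ← Finset.card_univ]
      exact (Finset.card_eq_sum_card_fiberwise (fun x _ => Finset.mem_univ (q x))).symm
    have hcomp : ∀ c : G.ConnectedComponent, ∃ I : Finset V,
        I ⊆ Finset.univ.filter (fun v => q v = c) ∧
        (∀ x ∈ I, ∀ y ∈ I, ¬ G.Adj x y) ∧
        (Finset.univ.filter (fun v => q v = c)).card ≤ k * I.card := by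
      intro c
      set U : Finset V := Finset.univ.filter (fun v => q v = c) with hU
      obtain ⟨v₀, hv₀⟩ : ∃ v, q v = c := Quot.exists_rep c
      have hv₀U : v₀ ∈ U := by simp [hU, hv₀]
      have hqadj : ∀ i (x : V), q (p i x) = q x := by
        intro i x
        exact (ConnectedComponent.sound ((hGadj x (p i x)).mpr
          ⟨i, (hadj i x _).mpr rfl⟩).reachable).symm
      have hUeven : Even U.card := by
        refine evenCardInv (p 0) U ?_ ?_ ?_
        · intro x hx
          simp only [hU, Finset.mem_filter, Finset.mem_univ, true_and] at hx ⊢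
          rw [hqadj 0 x]; exact hx
        · intro x _
          have h1 : (F 0).Adj (p 0 x) x := ((hadj 0 x (p 0 x)).mpr rfl).symm
          exact ((hadj 0 (p 0 x) x).mp h1).symm
        · intro x _ hfx
          have h1 : (F 0).Adj x (p 0 x) := (hadj 0 x _).mpr rfl
          rw [hfx] at h1
          exact (F 0).irrefl h1
      set A : Finset V := U.erase v₀ with hA
      have hdegen : ∀ B ⊆ A, B.Nonempty → ∃ v ∈ B, (B ∩ N v).card < k := by
        intro B hBA hBne
        by_contra hcon
        push_neg at hcon
        have hclosed : ∀ x ∈ B, ∀ y, G.Adj x y → y ∈ B := by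
          intro x hx y hadjxy
          have h1 : B ∩ N x ⊆ N x := Finset.inter_subset_right
          have h2 : (N x).card ≤ (B ∩ N x).card := (hNcard x).trans (hcon x hx)
          have h3 : B ∩ N x = N x := Finset.eq_of_subset_of_card_le h1 h2
          have hy : y ∈ B ∩ N x := by rw [h3]; exact hN x y hadjxy
          exact (Finset.mem_inter.mp hy).1
        obtain ⟨b, hb⟩ := hBne
        have hbU : b ∈ U := Finset.erase_subset _ _ (hBA hb)
        have hbq : q b = c := by
          simp only [hU, Finset.mem_filter] at hbU; exact hbU.2
        have hreach : G.Reachable b v₀ := ConnectedComponent.exact (hbq.trans hv₀.symm)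
        have hv0B : v₀ ∈ B := closedReach G B hclosed hreach hb
        exact (Finset.ne_of_mem_erase (hBA hv0B)) rfl
      obtain ⟨I, hIA, hIind, hIcard⟩ := indepLemma G N hN k A hdegen
      refine ⟨I, fun x hx => Finset.erase_subset _ _ (hIA hx), hIind, ?_⟩
      have hAcard : A.card = U.card - 1 := Finset.card_erase_of_mem hv₀U
      have hU1 : 1 ≤ U.card := Finset.card_pos.mpr ⟨v₀, hv₀U⟩
      have hkIeven : Even (k * I.card) := hkeven.mul_right _
      obtain ⟨a, ha⟩ := hUeven
      obtain ⟨b', hb'⟩ := hkIeven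
      omega
    choose Ic hIcsub hIcind hIccard using hcomp
    set I : Finset V := Finset.univ.biUnion Ic with hI
    have hmemq : ∀ c, ∀ x ∈ Ic c, q x = c := by
      intro c x hx
      have h1 := hIcsub c hx
      simp only [Finset.mem_filter] at h1
      exact h1.2
    have hIind : ∀ x ∈ I, ∀ y ∈ I, ¬ G.Adj x y := by
      intro x hx y hy hadjxy
      obtain ⟨c, _, hxc⟩ := Finset.mem_biUnion.mp hx
      obtain ⟨c', _, hyc⟩ := Finset.mem_biUnion.mp hy
      have hcc : c = c' := by
        rw [← hmemq c x hxc, ← hmemq c' y hyc]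
        exact ConnectedComponent.sound hadjxy.reachable
      subst hcc
      exact hIcind c x hxc y hyc hadjxy
    have hIcardBig : n ≤ k * I.card := by
      have hdisj : ∀ c ∈ (Finset.univ : Finset G.ConnectedComponent),
          ∀ c' ∈ (Finset.univ : Finset G.ConnectedComponent),
          c ≠ c' → Disjoint (Ic c) (Ic c') := by
        intro c _ c' _ hne
        rw [Finset.disjoint_left]
        intro x hx hx'
        exact hne ((hmemq c x hx).symm.trans (hmemq c' x hx'))
      rw [hI, Finset.card_biUnion hdisj, Finset.mul_sum]
      calc n = ∑ c : G.ConnectedComponent,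
            (Finset.univ.filter (fun v => q v = c)).card := hsum.symm
        _ ≤ ∑ c : G.ConnectedComponent, k * (Ic c).card :=
            Finset.sum_le_sum (fun c _ => hIccard c)
    have hdom := key I hIind
    have hIn := hIcard_le I
    have hcast : (simDomNum F : ℝ) ≤ (n : ℝ) - (I.card : ℝ) := by
      calc (simDomNum F : ℝ) ≤ ((n - I.card : ℕ) : ℝ) := Nat.cast_le.mpr hdom
        _ = (n : ℝ) - (I.card : ℝ) := by rw [Nat.cast_sub hIn]
    have hkpos : (0 : ℝ) < k := by positivity
    have hineq : (n : ℝ) ≤ (k : ℝ) * (I.card : ℝ) := by exact_mod_cast hIcardBig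
    calc (simDomNum F : ℝ) ≤ (n : ℝ) - (I.card : ℝ) := hcast
      _ ≤ ((k : ℝ) - 1) * n / k := by
          rw [le_div_iff₀ hkpos]; nlinarith
      _ = (((k : ℝ) - 1) / k) * n := by ring
  · -- Odd case
    intro _
    have hdegen : ∀ B ⊆ (Finset.univ : Finset V), B.Nonempty →
        ∃ v ∈ B, (B ∩ N v).card < k + 1 := by
      intro B _ hBne
      obtain ⟨v, hv⟩ := hBne
      refine ⟨v, hv, ?_⟩
      have h1 : (B ∩ N v).card ≤ (N v).card :=
        Finset.card_le_card Finset.inter_subset_right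
      have h2 := hNcard v
      omega
    obtain ⟨I, _, hIind, hIcard⟩ :=
      indepLemma G N hN (k + 1) Finset.univ hdegen
    have hIcardBig : n ≤ (k + 1) * I.card := by
      rw [← hn, ← Finset.card_univ]; exact hIcard
    have hdom := key I hIind
    have hIn := hIcard_le I
    have hcast : (simDomNum F : ℝ) ≤ (n : ℝ) - (I.card : ℝ) := by
      calc (simDomNum F : ℝ) ≤ ((n - I.card : ℕ) : ℝ) := Nat.cast_le.mpr hdom
        _ = (n : ℝ) - (I.card : ℝ) := by rw [Nat.cast_sub hIn]
    have hkpos : (0 : ℝ) < (k : ℝ) + 1 := by positivity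
    have hineq : (n : ℝ) ≤ ((k : ℝ) + 1) * (I.card : ℝ) := by exact_mod_cast hIcardBig
    calc (simDomNum F : ℝ) ≤ (n : ℝ) - (I.card : ℝ) := hcast
      _ ≤ (k : ℝ) * n / ((k : ℝ) + 1) := by
          rw [le_div_iff₀ hkpos]; nlinarith
      _ = ((k : ℝ) / ((k : ℝ) + 1)) * n := by ring
end

section
/- For k odd, k ≥ 3, and n a positive multiple of k+1, there exist graphs F_1, F_2, ..., F_k on a common vertex set of size n, each of which is 1-regular, such that the simultaneous domination number of F_1, ..., F_k equals exactly (k/(k+1)) · n. -/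
lemma simDomNum_eq {V : Type*} [Fintype V] {k m : ℕ} {F : Fin k → SimpleGraph V}
    (S : Finset V) (hS : ∀ i, ∀ v ∉ S, ∃ u ∈ S, (F i).Adj v u) (hcard : S.card = m)
    (hmin : ∀ T : Finset V, (∀ i, ∀ v ∉ T, ∃ u ∈ T, (F i).Adj v u) → m ≤ T.card) :
    simDomNum F = m :=
  IsLeast.csInf_eq ⟨⟨S, hS, hcard⟩, by rintro _ ⟨T, hT, rfl⟩; exact hmin T hT⟩

namespace SimpleGraph

variable {V : Type*}

def ofInvolution (σ : V → V) (hσ : Function.Involutive σ) (hfix : ∀ v, σ v ≠ v) :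
    SimpleGraph V where
  Adj v w := w = σ v
  symm := ⟨fun v w h => by rw [h, hσ v]⟩
  loopless := ⟨fun v h => hfix v h.symm⟩

lemma neighborSet_ofInvolution {σ : V → V} (hσ : Function.Involutive σ)
    (hfix : ∀ v, σ v ≠ v) (v : V) : (ofInvolution σ hσ hfix).neighborSet v = {σ v} :=
  rfl

end SimpleGraph

section Reflection

variable {R : Type*} [CommRing R] [DecidableEq R]

/-- `none` is the point at infinity. -/
def reflect (c : R) : Option R → Option R
  | none => some c
  | some a => if a = c then none else some (2 * c - a)

lemma reflect_involutive (c : R) : Function.Involutive (reflect c) := by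
  rintro (_ | a)
  · simp [reflect]
  · by_cases hac : a = c
    · simp [reflect, hac]
    · have hc : 2 * c - a ≠ c := fun h => hac (by linear_combination -h)
      simp [reflect, hac, hc]

variable (h2 : IsUnit (2 : R))
include h2

lemma reflect_ne (c : R) (x : Option R) : reflect c x ≠ x := by
  rcases x with _ | a
  · simp [reflect]
  · by_cases hac : a = c
    · simp [reflect, hac]
    · simp only [reflect, if_neg hac, ne_eq, Option.some.injEq]
      intro h
      exact hac (h2.mul_left_cancel (by linear_combination -h))

lemma exists_reflect_eq {x y : Option R} (hxy : x ≠ y) : ∃ c, reflect c x = y := by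
  rcases x with _ | a <;> rcases y with _ | b
  · exact absurd rfl hxy
  · exact ⟨b, rfl⟩
  · exact ⟨a, by simp [reflect]⟩
  · have hab : a ≠ b := by simpa using hxy
    obtain ⟨u, hu⟩ := h2
    set m : R := ↑u⁻¹ * (a + b)
    have hm : 2 * m = a + b := by rw [← hu, ← mul_assoc, Units.mul_inv, one_mul]
    have ham : a ≠ m := fun h => hab (by linear_combination hm + 2 * h)
    exact ⟨m, by simp only [reflect, if_neg ham]; congr 1; linear_combination hm⟩

end Reflection

lemma card_compl_le_of_forall_apply_mem {V β ι : Type*} [Fintype V] [DecidableEq V]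
    [Fintype β] (f : V → β) (σ : ι → V → V) (hcover : ∀ v w, v ≠ w → f v = f w → ∃ i, σ i v = w)
    {S : Finset V} (hS : ∀ i, ∀ v ∉ S, σ i v ∈ S) : Sᶜ.card ≤ Fintype.card β := by
  have hinj : Set.InjOn f (Sᶜ : Finset V) := by
    intro v hv w hw hvw
    by_contra hne
    obtain ⟨i, rfl⟩ := hcover v w hne hvw
    exact (Finset.mem_compl.mp hw) (hS i v (Finset.mem_compl.mp hv))
  simpa using Finset.card_le_card_of_injOn f (fun _ _ => Finset.mem_univ _) hinj

section Blocks

variable {V β R : Type*} [CommRing R] [DecidableEq R] (e : V ≃ β × Option R)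

def blockReflect (c : R) (v : V) : V := e.symm ((e v).1, reflect c (e v).2)

@[simp]
lemma apply_blockReflect (c : R) (v : V) :
    e (blockReflect e c v) = ((e v).1, reflect c (e v).2) :=
  e.apply_symm_apply _

lemma blockReflect_involutive (c : R) : Function.Involutive (blockReflect e c) := by
  intro v
  apply e.injective
  simp [reflect_involutive c _]

variable {e} (h2 : IsUnit (2 : R))
include h2

lemma blockReflect_ne (c : R) (v : V) : blockReflect e c v ≠ v := fun h =>
  reflect_ne h2 c (e v).2 (by simpa using congrArg (fun v => (e v).2) h)

lemma exists_blockReflect_eq {v w : V} (hvw : v ≠ w) (hblock : (e v).1 = (e w).1) :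
    ∃ c, blockReflect e c v = w := by
  obtain ⟨c, hc⟩ := exists_reflect_eq h2 fun h => hvw (e.injective (Prod.ext hblock h))
  exact ⟨c, e.injective (by simp [hc, hblock])⟩

lemma simDomNum_blockReflect [Fintype V] [Fintype β] [Fintype R] {k : ℕ} (g : Fin k ≃ R) :
    simDomNum (fun i => SimpleGraph.ofInvolution (blockReflect e (g i))
      (blockReflect_involutive e _) (blockReflect_ne h2 _)) = Fintype.card β * Fintype.card R := by
  classical
  let finitePoint : β × R → V := fun p => e.symm (p.1, some p.2)
  have hinj : finitePoint.Injective := fun p q h =>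
    Prod.ext_iff.mpr (by simpa [finitePoint] using h)
  refine simDomNum_eq (Finset.univ.image finitePoint) ?_
    (by simp [Finset.card_image_of_injective _ hinj]) fun T hT => ?_
  · intro i v hv
    have hinf : (e v).2 = none := by
      by_contra h
      obtain ⟨r, hr⟩ := Option.ne_none_iff_exists'.mp h
      exact hv (Finset.mem_image.mpr
        ⟨((e v).1, r), Finset.mem_univ _, by simp [finitePoint, ← hr]⟩)
    refine ⟨_, Finset.mem_image.mpr ⟨((e v).1, g i), Finset.mem_univ _, ?_⟩, rfl⟩
    simp [finitePoint, blockReflect, hinf, reflect]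
  · have hT' : ∀ i, ∀ v ∉ T, blockReflect e (g i) v ∈ T := fun i v hv => by
      obtain ⟨_, hu, rfl⟩ := hT i v hv
      exact hu
    have hcompl := card_compl_le_of_forall_apply_mem (fun v => (e v).1) _
      (fun v w hvw hblock => (exists_blockReflect_eq h2 hvw hblock).imp' g.symm
        fun c hc => by simpa using hc) hT'
    have hcardV : Fintype.card V = Fintype.card β * Fintype.card R + Fintype.card β := by
      simp [Fintype.card_congr e, mul_add]
    have hT_le := T.card_le_univ
    rw [Finset.card_compl] at hcompl
    omega

end Blocks

theorem stmt14_general {k n : ℕ} (hkodd : Odd k) (hdvd : (k + 1) ∣ n) :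
    ∃ F : Fin k → SimpleGraph (Fin n),
      (∀ i, ∀ v : Fin n, ((F i).neighborSet v).ncard = 1) ∧
      (simDomNum F : ℝ) = ((k : ℝ) / (k + 1)) * n := by
  have : NeZero k := ⟨hkodd.pos.ne'⟩
  obtain ⟨q, rfl⟩ := hdvd
  have h2 : IsUnit (2 : ZMod k) := by
    simpa using (ZMod.isUnit_iff_coprime 2 k).mpr (Nat.coprime_two_left.mpr hkodd)
  let e : Fin ((k + 1) * q) ≃ Fin q × Option (ZMod k) :=
    Fintype.equivOfCardEq (by simp [ZMod.card, mul_comm])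
  let g : Fin k ≃ ZMod k := (ZMod.finEquiv k).toEquiv
  refine ⟨fun i => SimpleGraph.ofInvolution (blockReflect e (g i))
    (blockReflect_involutive e _) (blockReflect_ne h2 _), fun i v => ?_, ?_⟩
  · rw [SimpleGraph.neighborSet_ofInvolution, Set.ncard_singleton]
  · rw [simDomNum_blockReflect h2 g]
    simp only [Fintype.card_fin, ZMod.card]
    push_cast
    field_simp

theorem stmt14 {k n : ℕ} (hkodd : Odd k) (hk : 3 ≤ k) (hn : 0 < n)
    (hdvd : (k + 1) ∣ n) :
    ∃ F : Fin k → SimpleGraph (Fin n),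
      (∀ i, ∀ v : Fin n, ((F i).neighborSet v).ncard = 1) ∧
      (simDomNum F : ℝ) = ((k : ℝ) / (k + 1)) * n :=
  stmt14_general hkodd hdvd
end

section
/- Let n ≥ 4 be even. If F_1 and F_2 are graphs on a common vertex set of size n, each of which is a Hamiltonian cycle (isomorphic to the cycle C_n), then the simultaneous domination number of F_1 and F_2 is at most n/2. Similarly, if each of F_1 and F_2 is a Hamiltonian path (isomorphic to the path P_n), then the simultaneous domination number of F_1 and F_2 is at most n/2. Furthermore, if n ≥ 5 is odd and each of F_1 and F_2 is isomorphic to the cycle C_n, then the simultaneous domination number of F_1 and F_2 is at most (n+1)/2. -/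
/-!
Each of `F₁`, `F₂` contains a Hamiltonian path, hence a matching missing at most one vertex,
encoded as an involution `mᵢ` whose fixed points are the unmatched vertices. If `m₁`, `m₂` are
fixed-point-free, the union of the two matchings is bipartite: `m₁` conjugates `σ = m₂ ∘ m₁` to
`σ⁻¹`, so `v` and `m₁ v` never lie in the same `σ`-orbit, and `m₁` pairs up the orbits. Choosing
one colour per pair of orbits gives a 2-colouring in which every matching edge is bichromatic;
each colour class has `n / 2` vertices and dominates both graphs along the matchings. For odd `n`,
add a new vertex matched to the unmatched vertex of both matchings and take the colour class
avoiding it.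
-/

open Finset

namespace Function.Involutive

variable {α : Type*} {f g : α → α}

theorem exists_bool_flip (hf : Involutive f) (hf₀ : ∀ a, f a ≠ a) :
    ∃ c : α → Bool, ∀ a, c (f a) = !c a := by
  let _ : LinearOrder α := WellOrderingRel.isWellOrder.linearOrder
  refine ⟨fun a => decide (a < f a), fun a => ?_⟩
  simp only [hf a]
  rcases lt_or_gt_of_ne (hf₀ a) with h | h <;> simp [h, h.not_gt]

theorem semiconjBy_toPerm_zpow (hf : Involutive f) (hg : Involutive g) (k : ℤ) :
    SemiconjBy (hf.toPerm f) ((hg.toPerm g * hf.toPerm f) ^ k)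
      ((hg.toPerm g * hf.toPerm f) ^ (-k)) := by
  rw [zpow_neg, ← inv_zpow]
  refine SemiconjBy.zpow_right (Equiv.ext fun x => ?_) k
  simp [Equiv.Perm.mul_apply, hf.toPerm_symm, hg.toPerm_symm, Equiv.Perm.inv_def]

theorem not_sameCycle_apply (hf : Involutive f) (hg : Involutive g)
    (hf₀ : ∀ a, f a ≠ a) (hg₀ : ∀ a, g a ≠ a) (x : α) :
    ¬ (hg.toPerm g * hf.toPerm f).SameCycle x (f x) := by
  set σ := hg.toPerm g * hf.toPerm f
  have hσ : ∀ y, σ y = g (f y) := fun _ => rfl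
  have hcomm : ∀ (j : ℤ) y, f ((σ ^ j) y) = (σ ^ (-j)) (f y) := fun j y =>
    congrArg (· y) (semiconjBy_toPerm_zpow hf hg j).eq
  have hshift : ∀ i j : ℤ, (σ ^ i) ((σ ^ j) x) = (σ ^ (i + j)) x := fun i j => by
    rw [zpow_add, Equiv.Perm.mul_apply]
  rintro ⟨k, hk⟩
  obtain ⟨j, rfl | rfl⟩ := Int.even_or_odd' k
  · apply hf₀ ((σ ^ j) x)
    rw [hcomm, ← hk, hshift]
    congr 2
    ring
  · apply hg₀ (f ((σ ^ j) x))
    rw [← hσ, hcomm, ← hk, hshift, ← Equiv.Perm.mul_apply, ← zpow_one_add]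
    congr 2
    ring

theorem sameCycle_apply_apply (hf : Involutive f) (hg : Involutive g) {x y : α}
    (h : (hg.toPerm g * hf.toPerm f).SameCycle x y) :
    (hg.toPerm g * hf.toPerm f).SameCycle (f x) (f y) := by
  obtain ⟨k, rfl⟩ := h
  exact ⟨-k, (congrArg (· x) (semiconjBy_toPerm_zpow hf hg k).eq).symm⟩

theorem exists_common_bool_flip (hf : Involutive f) (hg : Involutive g)
    (hf₀ : ∀ a, f a ≠ a) (hg₀ : ∀ a, g a ≠ a) :
    ∃ c : α → Bool, (∀ a, c (f a) = !c a) ∧ ∀ a, c (g a) = !c a := by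
  set σ := hg.toPerm g * hf.toPerm f
  let _ : Setoid α := Equiv.Perm.SameCycle.setoid σ
  let f' : Quotient ‹Setoid α› → Quotient ‹Setoid α› :=
    Quotient.map f fun _ _ => sameCycle_apply_apply hf hg
  have hf' : Involutive f' := Quotient.ind fun a => congrArg Quotient.mk'' (hf a)
  have hf'₀ : ∀ q, f' q ≠ q := Quotient.ind fun a h =>
    not_sameCycle_apply hf hg hf₀ hg₀ a (Quotient.exact h).symm
  obtain ⟨c, hc⟩ := hf'.exists_bool_flip hf'₀
  refine ⟨fun a => c ⟦a⟧, fun a => hc ⟦a⟧, fun a => ?_⟩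
  have hga : g a = σ (f a) := by simp [σ, hf a]
  have : (⟦g a⟧ : Quotient ‹Setoid α›) = ⟦f a⟧ :=
    Quotient.sound <| hga ▸ Equiv.Perm.sameCycle_apply_left.mpr (.refl σ (f a))
  simp only [this]
  exact hc ⟦a⟧

theorem two_mul_card_filter_eq [Fintype α] {c : α → Bool} (hf : Involutive f)
    (hc : ∀ a, c (f a) = !c a) (b : Bool) :
    2 * #{a | c a = b} = Fintype.card α := by
  have hswap : #{a | c a = b} = #{a | c a = !b} :=
    card_nbij' f f (fun a ha => by simp_all) (fun a ha => by simp_all)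
      (fun a _ => hf a) (fun a _ => hf a)
  have hsplit := card_filter_add_card_filter_not (s := univ) (fun a => c a = b)
  simp only [← Bool.eq_not, card_univ] at hsplit
  omega

end Function.Involutive

namespace Function

variable {V : Type*} [DecidableEq V]

def swapNone (m : V → V) (u : V) : Option V → Option V
  | none => some u
  | some v => if v = u then none else some (m v)

variable {m : V → V} {u : V}

@[simp]
theorem swapNone_none : swapNone m u none = some u := rfl

theorem swapNone_some_of_ne {v : V} (hv : v ≠ u) : swapNone m u (some v) = some (m v) :=
  if_neg hv

theorem Involutive.swapNone (hm : Involutive m) (hu : m u = u) :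
    Involutive (swapNone m u) := by
  rintro (_ | v)
  · simp [Function.swapNone]
  · by_cases hv : v = u
    · simp [Function.swapNone, hv]
    · have hmv : m v ≠ u := fun h => hv (by rw [← hm v, h, hu])
      simp [Function.swapNone, hv, hmv, hm v]

theorem swapNone_ne (hfix : ∀ v, m v = v ↔ v = u) (w : Option V) : swapNone m u w ≠ w := by
  rcases w with _ | v
  · simp
  · by_cases hv : v = u
    · simp [swapNone, hv]
    · simpa [swapNone, hv] using (hfix v).not.mpr hv

end Function

namespace SimpleGraph

variable {V W : Type*}

def IsMatchingInvolution (G : SimpleGraph V) (m : V → V) : Prop :=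
  Function.Involutive m ∧ ∀ v, m v ≠ v → G.Adj v (m v)

variable {G : SimpleGraph V} {H : SimpleGraph W} {m : W → W}

theorem IsMatchingInvolution.mono {H' : SimpleGraph W} (h : H.IsMatchingInvolution m)
    (hHH' : H ≤ H') : H'.IsMatchingInvolution m :=
  ⟨h.1, fun v hv => hHH' (h.2 v hv)⟩

theorem IsMatchingInvolution.comap (h : H.IsMatchingInvolution m) (e : G ≃g H) :
    G.IsMatchingInvolution (e.symm ∘ m ∘ e) := by
  refine ⟨fun v => by simp [h.1 (e v)], fun v hv => ?_⟩
  have hne : m (e v) ≠ e v := fun h' => hv (by simp [h'])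
  simpa using e.symm.map_adj_iff.mpr (h.2 (e v) hne)

def pathMatching (n : ℕ) (v : Fin n) : Fin n :=
  if h : v.val % 2 = 0 ∧ v.val + 1 < n then ⟨v.val + 1, h.2⟩
  else if v.val % 2 = 1 then ⟨v.val - 1, by omega⟩ else v

theorem val_pathMatching {n : ℕ} (v : Fin n) :
    (pathMatching n v).val =
      if v.val % 2 = 0 ∧ v.val + 1 < n then v.val + 1
      else if v.val % 2 = 1 then v.val - 1 else v.val := by
  unfold pathMatching
  split_ifs <;> rfl

theorem pathMatching_eq_self_iff {n : ℕ} (v : Fin n) :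
    pathMatching n v = v ↔ v.val % 2 = 0 ∧ v.val + 1 = n := by
  rw [Fin.ext_iff, val_pathMatching]
  split_ifs <;> omega

theorem isMatchingInvolution_pathMatching (n : ℕ) :
    (pathGraph n).IsMatchingInvolution (pathMatching n) := by
  refine ⟨fun v => Fin.ext ?_, fun v hv => ?_⟩
  · rw [val_pathMatching, val_pathMatching]
    split_ifs <;> omega
  · rw [Ne, Fin.ext_iff, val_pathMatching] at hv
    rw [pathGraph_adj, val_pathMatching]
    split_ifs at hv ⊢ <;> omega

theorem exists_perfect_isMatchingInvolution {n : ℕ} {H : SimpleGraph (Fin n)} (hn : Even n)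
    (hH : pathGraph n ≤ H) (e : G ≃g H) :
    ∃ m, G.IsMatchingInvolution m ∧ ∀ v, m v ≠ v := by
  refine ⟨_, ((isMatchingInvolution_pathMatching n).mono hH).comap e, fun v hv => ?_⟩
  rw [Function.comp_apply, Function.comp_apply, e.symm_apply_eq, pathMatching_eq_self_iff] at hv
  have := (e v).isLt
  grind

theorem exists_nearPerfect_isMatchingInvolution {n : ℕ} {H : SimpleGraph (Fin n)} (hn : Odd n)
    (hH : pathGraph n ≤ H) (e : G ≃g H) :
    ∃ m u, G.IsMatchingInvolution m ∧ ∀ v, m v = v ↔ v = u := by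
  refine ⟨_, e.symm ⟨n - 1, by grind⟩, ((isMatchingInvolution_pathMatching n).mono hH).comap e,
    fun v => ?_⟩
  rw [Function.comp_apply, Function.comp_apply, e.symm_apply_eq, pathMatching_eq_self_iff,
    e.eq_symm_apply, Fin.ext_iff]
  grind

end SimpleGraph

section SimDom

variable {V : Type*} [Fintype V] {F₁ F₂ : SimpleGraph V} {m₁ m₂ : V → V}

theorem simDomNum_le_card_s15 (S : Finset V) (h₁ : ∀ v ∉ S, ∃ u ∈ S, F₁.Adj v u)
    (h₂ : ∀ v ∉ S, ∃ u ∈ S, F₂.Adj v u) : simDomNum ![F₁, F₂] ≤ #S :=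
  Nat.sInf_le ⟨S, fun i => by fin_cases i; exacts [h₁, h₂], rfl⟩

theorem simDomNum_le_half (h₁ : F₁.IsMatchingInvolution m₁) (h₂ : F₂.IsMatchingInvolution m₂)
    (hm₁ : ∀ v, m₁ v ≠ v) (hm₂ : ∀ v, m₂ v ≠ v) :
    simDomNum ![F₁, F₂] ≤ Fintype.card V / 2 := by
  obtain ⟨c, hc₁, hc₂⟩ := h₁.1.exists_common_bool_flip h₂.1 hm₁ hm₂
  have hcard := h₁.1.two_mul_card_filter_eq hc₁ true
  have hdom := simDomNum_le_card_s15 {v | c v = true}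
    (fun v hv => ⟨m₁ v, by simpa [hc₁] using hv, h₁.2 v (hm₁ v)⟩)
    (fun v hv => ⟨m₂ v, by simpa [hc₂] using hv, h₂.2 v (hm₂ v)⟩)
  omega

theorem simDomNum_le_half_succ {u₁ u₂ : V} (h₁ : F₁.IsMatchingInvolution m₁)
    (h₂ : F₂.IsMatchingInvolution m₂) (hu₁ : ∀ v, m₁ v = v ↔ v = u₁)
    (hu₂ : ∀ v, m₂ v = v ↔ v = u₂) :
    simDomNum ![F₁, F₂] ≤ (Fintype.card V + 1) / 2 := by
  classical
  obtain ⟨c, hc₁, hc₂⟩ := (h₁.1.swapNone ((hu₁ u₁).mpr rfl)).exists_common_bool_flip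
    (h₂.1.swapNone ((hu₂ u₂).mpr rfl)) (Function.swapNone_ne hu₁) (Function.swapNone_ne hu₂)
  set b := c none
  set S : Finset V := {v | c (some v) = !b}
  have hcard : 2 * #S = Fintype.card V + 1 := by
    have hmap : ({w | c w = !b} : Finset (Option V)) = S.map .some := by
      ext (_ | v) <;> simp [S, b]
    have := (h₁.1.swapNone ((hu₁ u₁).mpr rfl)).two_mul_card_filter_eq hc₁ (!b)
    rwa [hmap, card_map, Fintype.card_option] at this
  have hdom {F : SimpleGraph V} {m : V → V} {u : V} (h : F.IsMatchingInvolution m)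
      (hu : ∀ v, m v = v ↔ v = u) (hc : ∀ w, c (Function.swapNone m u w) = !c w) :
      ∀ v ∉ S, ∃ w ∈ S, F.Adj v w := by
    intro v hv
    have hvb : c (some v) = b := by simpa [S] using hv
    have hvu : v ≠ u := by
      rintro rfl
      exact Bool.eq_not_self b |>.mp (hvb.symm.trans (hc none))
    refine ⟨m v, ?_, h.2 v ((hu v).not.mpr hvu)⟩
    simpa [S, Function.swapNone_some_of_ne hvu, hvb] using hc (some v)
  have := simDomNum_le_card_s15 S (hdom h₁ hu₁ hc₁) (hdom h₂ hu₂ hc₂)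
  omega

end SimDom

open SimpleGraph in
theorem stmt15 {V : Type*} [Fintype V] {n : ℕ} (hn : Fintype.card V = n)
    (F₁ F₂ : SimpleGraph V) :
    (4 ≤ n → Even n →
      ((Nonempty (F₁ ≃g SimpleGraph.cycleGraph n) ∧
          Nonempty (F₂ ≃g SimpleGraph.cycleGraph n)) →
        simDomNum ![F₁, F₂] ≤ n / 2) ∧
      ((Nonempty (F₁ ≃g SimpleGraph.pathGraph n) ∧
          Nonempty (F₂ ≃g SimpleGraph.pathGraph n)) →
        simDomNum ![F₁, F₂] ≤ n / 2)) ∧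
    (5 ≤ n → Odd n →
      (Nonempty (F₁ ≃g SimpleGraph.cycleGraph n) ∧
          Nonempty (F₂ ≃g SimpleGraph.cycleGraph n)) →
        simDomNum ![F₁, F₂] ≤ (n + 1) / 2) := by
  subst hn
  have even_case {H₁ H₂ : SimpleGraph (Fin (Fintype.card V))} (hn : Even (Fintype.card V))
      (hH₁ : pathGraph _ ≤ H₁) (hH₂ : pathGraph _ ≤ H₂) :
      Nonempty (F₁ ≃g H₁) ∧ Nonempty (F₂ ≃g H₂) →
        simDomNum ![F₁, F₂] ≤ Fintype.card V / 2 := by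
    rintro ⟨⟨e₁⟩, ⟨e₂⟩⟩
    obtain ⟨m₁, h₁, hm₁⟩ := exists_perfect_isMatchingInvolution hn hH₁ e₁
    obtain ⟨m₂, h₂, hm₂⟩ := exists_perfect_isMatchingInvolution hn hH₂ e₂
    exact simDomNum_le_half h₁ h₂ hm₁ hm₂
  refine ⟨fun _ hn => ⟨even_case hn pathGraph_le_cycleGraph pathGraph_le_cycleGraph,
    even_case hn le_rfl le_rfl⟩, fun _ hn ⟨⟨e₁⟩, ⟨e₂⟩⟩ => ?_⟩
  obtain ⟨m₁, u₁, h₁, hu₁⟩ :=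
    exists_nearPerfect_isMatchingInvolution hn pathGraph_le_cycleGraph e₁
  obtain ⟨m₂, u₂, h₂, hu₂⟩ :=
    exists_nearPerfect_isMatchingInvolution hn pathGraph_le_cycleGraph e₂
  exact simDomNum_le_half_succ h₁ h₂ hu₁ hu₂
end
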